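/- Under the two-sample compositional model with Assumptions A1(i), A2 and A3, where the constant K4 of A1(i) is bounded, if n1²·‖μ‖⁴ / max(n1·μ^T Σ μ, tr(Σ²)) → ∞, where μ = G(ν^(1) − ν^(2)) and Σ = GΩG^T, then the quadratic-type test is consistent: P(Q_{n1,n2} > z_α) → 1 as n1, n2, p → ∞, where z_α is the upper α-quantile of the standard normal distribution. -/

import Mathlib

open MeasureTheory ProbabilityTheory Filter Matrix
open scoped BigOperators Topology Classical

noncomputable section

/-- The CLR centering matrix `G = I_p − (1/p)·1_p 1_pᵀ`. -/
def Gmat (p : ℕ) : Matrix (Fin p) (Fin p) ℝ :=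
  1 - (p : ℝ)⁻¹ • Matrix.of (fun _ _ => (1 : ℝ))

/-- Coordinatewise sample mean. -/
def sampleMean {n p : ℕ} (X : Fin n → Fin p → ℝ) (j : Fin p) : ℝ :=
  (∑ i, X i j) / n

/-- Pooled sample variance of coordinate `j`. -/
def pooledVar {n1 n2 p : ℕ} (X : Fin n1 → Fin p → ℝ) (Y : Fin n2 → Fin p → ℝ)
    (j : Fin p) : ℝ :=
  ((∑ i, (X i j - sampleMean X j) ^ 2) + (∑ i, (Y i j - sampleMean Y j) ^ 2)) / (n1 + n2)

/-- The maximum-type statistic `M_{n1,n2}`. -/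
def Mstat {n1 n2 p : ℕ} (X : Fin n1 → Fin p → ℝ) (Y : Fin n2 → Fin p → ℝ) : ℝ :=
  ((n1 : ℝ) * n2 / (n1 + n2)) *
    ⨆ j : Fin p, (sampleMean X j - sampleMean Y j) ^ 2 / pooledVar X Y j

/-- The quadratic-form statistic `T_{n1,n2}` of Chen and Qin. -/
def Tstat {n1 n2 p : ℕ} (X : Fin n1 → Fin p → ℝ) (Y : Fin n2 → Fin p → ℝ) : ℝ :=
  (∑ i, ∑ j, if i ≠ j then X i ⬝ᵥ X j else 0) / ((n1 : ℝ) * ((n1 : ℝ) - 1))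
  + (∑ i, ∑ j, if i ≠ j then Y i ⬝ᵥ Y j else 0) / ((n2 : ℝ) * ((n2 : ℝ) - 1))
  - 2 * (∑ i, ∑ j, X i ⬝ᵥ Y j) / ((n1 : ℝ) * (n2 : ℝ))

/-- The null variance `σ²_{n1,n2}` of `T_{n1,n2}`, where `S` is the CLR covariance matrix. -/
def sigma2 (n1 n2 : ℕ) {p : ℕ} (S : Matrix (Fin p) (Fin p) ℝ) : ℝ :=
  2 * (S * S).trace / ((n1 : ℝ) * ((n1 : ℝ) - 1))
  + 2 * (S * S).trace / ((n2 : ℝ) * ((n2 : ℝ) - 1))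
  + 4 * (S * S).trace / ((n1 : ℝ) * (n2 : ℝ))

/-- The standardized quadratic-type statistic `Q_{n1,n2}`. -/
def Qstat {n1 n2 p : ℕ} (S : Matrix (Fin p) (Fin p) ℝ)
    (X : Fin n1 → Fin p → ℝ) (Y : Fin n2 → Fin p → ℝ) : ℝ :=
  Tstat X Y / Real.sqrt (sigma2 n1 n2 S)

/-- Standard normal cumulative distribution function `Φ`. -/
def stdNormalCDF (x : ℝ) : ℝ := ((gaussianReal 0 1) (Set.Iic x)).toReal

/-- The Gumbel cdf `F(y) = exp(−π^{−1/2}·exp(−y/2))`. -/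
def gumbelCDF (y : ℝ) : ℝ := Real.exp (-(Real.exp (-y / 2)) / Real.sqrt Real.pi)

/-- The p-value of the maximum-type statistic. -/
def pvalM {n1 n2 p : ℕ} (X : Fin n1 → Fin p → ℝ) (Y : Fin n2 → Fin p → ℝ) : ℝ :=
  1 - gumbelCDF (Mstat X Y - 2 * Real.log p + Real.log (Real.log p))

/-- The p-value of the quadratic-type statistic. -/
def pvalQ {n1 n2 p : ℕ} (S : Matrix (Fin p) (Fin p) ℝ)
    (X : Fin n1 → Fin p → ℝ) (Y : Fin n2 → Fin p → ℝ) : ℝ :=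
  1 - stdNormalCDF (Qstat S X Y)

/-- Fisher's combination statistic. -/
def fisherStat {n1 n2 p : ℕ} (S : Matrix (Fin p) (Fin p) ℝ)
    (X : Fin n1 → Fin p → ℝ) (Y : Fin n2 → Fin p → ℝ) : ℝ :=
  -2 * (Real.log (pvalM X Y) + Real.log (pvalQ S X Y))

/-- Cauchy combination statistic with weights `wM, wQ`. -/
def cauchyStat {n1 n2 p : ℕ} (wM wQ : ℝ) (S : Matrix (Fin p) (Fin p) ℝ)
    (X : Fin n1 → Fin p → ℝ) (Y : Fin n2 → Fin p → ℝ) : ℝ :=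
  wM * Real.tan ((0.5 - pvalM X Y) * Real.pi)
  + wQ * Real.tan ((0.5 - pvalQ S X Y) * Real.pi)

/-- Survival function of the χ²₄ distribution. -/
def chisq4Survival (t : ℝ) : ℝ := Real.exp (-t / 2) * (1 + t / 2)

/-- Cdf of the χ²₄ distribution. -/
def chisq4CDF (t : ℝ) : ℝ := if t ≤ 0 then 0 else 1 - chisq4Survival t

/-- Upper `α`-quantile of the χ²₄ distribution. -/
def chisq4UpperQuantile (α : ℝ) : ℝ := sInf {t : ℝ | 0 ≤ t ∧ chisq4Survival t ≤ α}

/-- Cdf of the standard Cauchy distribution. -/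
def cauchyCDF (t : ℝ) : ℝ := 1 / 2 + Real.arctan t / Real.pi

/-- Upper `α`-quantile of the standard Cauchy distribution. -/
def cauchyUpperQuantile (α : ℝ) : ℝ := Real.tan (Real.pi * (1 / 2 - α))

/-- Upper `α`-quantile of the standard normal distribution. -/
def stdNormalUpperQuantile (α : ℝ) : ℝ := sInf {x : ℝ | 1 - stdNormalCDF x ≤ α}

/-- Largest eigenvalue of a symmetric matrix, as the supremum of the Rayleigh quotient. -/
def maxEig {p : ℕ} (A : Matrix (Fin p) (Fin p) ℝ) : ℝ :=
  sSup {r : ℝ | ∃ x : Fin p → ℝ, (∑ j, x j ^ 2) = 1 ∧ r = x ⬝ᵥ A.mulVec x}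

/-- Correlation matrix associated with a covariance matrix. -/
def corrMat {p : ℕ} (A : Matrix (Fin p) (Fin p) ℝ) : Matrix (Fin p) (Fin p) ℝ :=
  Matrix.of fun i j => A i j / Real.sqrt (A i i * A j j)

/-- Canonical sample space carrying the two samples of log-basis vectors. -/
abbrev SampleSpace (n1 n2 p : ℕ) : Type :=
  (Fin n1 → Fin p → ℝ) × (Fin n2 → Fin p → ℝ)

/-- The two-sample compositional model: a sequence (indexed by `n`) of experiments.
For each `n` we are given sample sizes `n1 n`, `n2 n`, a dimension `p n`, and a joint
law `P n` of the two samples of log-basis vectors (realized as the coordinate maps on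
the canonical sample space); within each sample the vectors are i.i.d., the two samples
are mutually independent, with means `ν1 n`, `ν2 n` and common covariance matrix `Omat n`. -/
structure CompModel where
  n1 : ℕ → ℕ
  n2 : ℕ → ℕ
  p : ℕ → ℕ
  P : ∀ n, Measure (SampleSpace (n1 n) (n2 n) (p n))
  probP : ∀ n, IsProbabilityMeasure (P n)
  ν1 : ∀ n, Fin (p n) → ℝ
  ν2 : ∀ n, Fin (p n) → ℝ
  Omat : ∀ n, Matrix (Fin (p n)) (Fin (p n)) ℝ
  /-- within-sample identical distributions (first sample) -/
  ident1 : ∀ n (i i' : Fin (n1 n)),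
    Measure.map (fun ω : SampleSpace (n1 n) (n2 n) (p n) => ω.1 i) (P n)
      = Measure.map (fun ω => ω.1 i') (P n)
  /-- within-sample identical distributions (second sample) -/
  ident2 : ∀ n (i i' : Fin (n2 n)),
    Measure.map (fun ω : SampleSpace (n1 n) (n2 n) (p n) => ω.2 i) (P n)
      = Measure.map (fun ω => ω.2 i') (P n)
  /-- all `n1 n + n2 n` log-basis vectors are mutually independent -/
  indep : ∀ n, iIndepFun
    (Sum.elim (fun (i : Fin (n1 n)) (ω : SampleSpace (n1 n) (n2 n) (p n)) => ω.1 i)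
              (fun (i : Fin (n2 n)) ω => ω.2 i)) (P n)
  int1 : ∀ n i j, Integrable (fun ω : SampleSpace (n1 n) (n2 n) (p n) => ω.1 i j) (P n)
  int2 : ∀ n i j, Integrable (fun ω : SampleSpace (n1 n) (n2 n) (p n) => ω.2 i j) (P n)
  intSq1 : ∀ n i j k,
    Integrable (fun ω : SampleSpace (n1 n) (n2 n) (p n) => ω.1 i j * ω.1 i k) (P n)
  intSq2 : ∀ n i j k,
    Integrable (fun ω : SampleSpace (n1 n) (n2 n) (p n) => ω.2 i j * ω.2 i k) (P n)
  mean1 : ∀ n i j, ∫ ω, (fun ω : SampleSpace (n1 n) (n2 n) (p n) => ω.1 i j) ω ∂(P n) = ν1 n j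
  mean2 : ∀ n i j, ∫ ω, (fun ω : SampleSpace (n1 n) (n2 n) (p n) => ω.2 i j) ω ∂(P n) = ν2 n j
  cov1 : ∀ n i j k,
    ∫ ω, (fun ω : SampleSpace (n1 n) (n2 n) (p n) =>
      (ω.1 i j - ν1 n j) * (ω.1 i k - ν1 n k)) ω ∂(P n) = Omat n j k
  cov2 : ∀ n i j k,
    ∫ ω, (fun ω : SampleSpace (n1 n) (n2 n) (p n) =>
      (ω.2 i j - ν2 n j) * (ω.2 i k - ν2 n k)) ω ∂(P n) = Omat n j k

namespace CompModel

variable (Mo : CompModel)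

/-- The CLR covariance matrix `Σ = G Ω Gᵀ`. -/
def Sigma (n : ℕ) : Matrix (Fin (Mo.p n)) (Fin (Mo.p n)) ℝ :=
  Gmat (Mo.p n) * Mo.Omat n * (Gmat (Mo.p n))ᵀ

/-- The CLR-transformed first sample `X_i = G δ_i^{(1)}`. -/
def Xc (n : ℕ) (ω : SampleSpace (Mo.n1 n) (Mo.n2 n) (Mo.p n)) :
    Fin (Mo.n1 n) → Fin (Mo.p n) → ℝ :=
  fun i => (Gmat (Mo.p n)).mulVec (ω.1 i)

/-- The CLR-transformed second sample `Y_i = G δ_i^{(2)}`. -/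
def Yc (n : ℕ) (ω : SampleSpace (Mo.n1 n) (Mo.n2 n) (Mo.p n)) :
    Fin (Mo.n2 n) → Fin (Mo.p n) → ℝ :=
  fun i => (Gmat (Mo.p n)).mulVec (ω.2 i)

/-- Assumption A1(i): uniform fourth-moment bound with constant `K4`. -/
def A1i (K4 : ℝ) : Prop :=
  ∀ n (a : Fin (Mo.p n) → ℝ),
    (∀ i : Fin (Mo.n1 n),
      Integrable (fun ω : SampleSpace (Mo.n1 n) (Mo.n2 n) (Mo.p n) =>
        |∑ j, a j * (ω.1 i j - Mo.ν1 n j)| ^ 4) (Mo.P n) ∧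
      (∫ ω, |∑ j, a j * (ω.1 i j - Mo.ν1 n j)| ^ 4 ∂(Mo.P n)) ^ ((1 : ℝ) / 4)
        ≤ K4 * (∫ ω, |∑ j, a j * (ω.1 i j - Mo.ν1 n j)| ^ 2 ∂(Mo.P n)) ^ ((1 : ℝ) / 2)) ∧
    (∀ i : Fin (Mo.n2 n),
      Integrable (fun ω : SampleSpace (Mo.n1 n) (Mo.n2 n) (Mo.p n) =>
        |∑ j, a j * (ω.2 i j - Mo.ν2 n j)| ^ 4) (Mo.P n) ∧
      (∫ ω, |∑ j, a j * (ω.2 i j - Mo.ν2 n j)| ^ 4 ∂(Mo.P n)) ^ ((1 : ℝ) / 4)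
        ≤ K4 * (∫ ω, |∑ j, a j * (ω.2 i j - Mo.ν2 n j)| ^ 2 ∂(Mo.P n)) ^ ((1 : ℝ) / 2))

/-- Assumption A1(ii): third-moment bound on the maximum coordinate. -/
def A1ii : Prop :=
  ∃ M : ℕ → ℝ, (∀ n, 0 ≤ M n) ∧
    (∀ n (i : Fin (Mo.n1 n)),
      ∫ ω, (⨆ j, |(fun ω : SampleSpace (Mo.n1 n) (Mo.n2 n) (Mo.p n) => ω.1 i) ω j| ^ 3) ∂(Mo.P n)
        ≤ M n ^ 3 * Real.log (Mo.p n) ^ ((3 : ℝ) / 2)) ∧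
    (∀ n (i : Fin (Mo.n2 n)),
      ∫ ω, (⨆ j, |(fun ω : SampleSpace (Mo.n1 n) (Mo.n2 n) (Mo.p n) => ω.2 i) ω j| ^ 3) ∂(Mo.P n)
        ≤ M n ^ 3 * Real.log (Mo.p n) ^ ((3 : ℝ) / 2)) ∧
    (fun n => Real.log (Mo.p n) ^ (10 : ℕ) * M n ^ (6 : ℕ))
      =o[atTop] (fun n => ((Mo.n1 n + Mo.n2 n : ℕ) : ℝ))

/-- Assumption A2(i): diagonal entries of `Ω` bounded away from zero and infinity. -/
def A2i : Prop :=
  ∃ C : ℝ, 0 < C ∧ ∀ n j, 1 / C ≤ Mo.Omat n j j ∧ Mo.Omat n j j ≤ C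

/-- Assumption A2(ii): `λ₁(Ω)/√tr(Ω²) = o((log p)^{−1−α0})`, and all but `q = o(p)` of the
eigenvalues of the (positive semidefinite) covariance matrix `Ω` are positive, i.e.
`rank(Ω) ≥ p − q`. -/
def A2ii (α0 : ℝ) : Prop :=
  ((fun n => maxEig (Mo.Omat n) / Real.sqrt ((Mo.Omat n * Mo.Omat n).trace))
      =o[atTop] (fun n => Real.log (Mo.p n) ^ (-(1 + α0) : ℝ))) ∧
  ∃ q : ℕ → ℕ, (fun n => (q n : ℝ)) =o[atTop] (fun n => ((Mo.p n : ℕ) : ℝ)) ∧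
    ∀ n, Mo.p n - q n ≤ (Mo.Omat n).rank

/-- Assumption A3 together with the asymptotic regime `n1, n2, p → ∞`. -/
def A3 (c : ℝ) : Prop :=
  c ∈ Set.Ioo (0 : ℝ) 1 ∧
  Tendsto (fun n => Mo.n1 n) atTop atTop ∧
  Tendsto (fun n => Mo.n2 n) atTop atTop ∧
  Tendsto (fun n => Mo.p n) atTop atTop ∧
  Tendsto (fun n => (Mo.n1 n : ℝ) / ((Mo.n1 n : ℝ) + (Mo.n2 n : ℝ))) atTop (𝓝 c)

/-- Assumption A4 on the correlation matrix `τ` of the log-basis vectors. -/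
def A4 (α0 : ℝ) : Prop :=
  (∀ κ : ℝ, 0 < κ →
    (fun n => ((Finset.univ.sup (fun i : Fin (Mo.p n) =>
        (Finset.univ.filter (fun j : Fin (Mo.p n) =>
          j ≠ i ∧ Real.log (Mo.p n) ^ (-(1 + α0) : ℝ) ≤ |corrMat (Mo.Omat n) i j|)).card) : ℕ) : ℝ))
      =o[atTop] (fun n => (Mo.p n : ℝ) ^ κ)) ∧
  (∃ r0 : ℝ, r0 ∈ Set.Ioo (0 : ℝ) 1 ∧
    (fun n => ((Finset.univ.filter (fun i : Fin (Mo.p n) =>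
        ∃ j, j ≠ i ∧ r0 ≤ |corrMat (Mo.Omat n) i j|)).card : ℝ))
      =o[atTop] (fun n => (Mo.p n : ℝ)))

/-- The null hypothesis `H₀ : ν^{(1)} = ν^{(2)} + c·1_p` for some `c ∈ ℝ`. -/
def NullHyp : Prop := ∀ n, ∃ c : ℝ, ∀ j, Mo.ν1 n j = Mo.ν2 n j + c

/-- The CLR mean difference `μ = G(ν^{(1)} − ν^{(2)})`. -/
def muDiff (n : ℕ) : Fin (Mo.p n) → ℝ :=
  (Gmat (Mo.p n)).mulVec (fun j => Mo.ν1 n j - Mo.ν2 n j)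

/-- The alternative variance `σ²_{n,a} = σ²_{n1,n2} + 4((n1+n2)/(n1 n2))·μᵀΣμ`. -/
def sigmaNA2 (n : ℕ) : ℝ :=
  sigma2 (Mo.n1 n) (Mo.n2 n) (Mo.Sigma n)
    + 4 * (((Mo.n1 n : ℝ) + (Mo.n2 n : ℝ)) / ((Mo.n1 n : ℝ) * (Mo.n2 n : ℝ)))
        * (Mo.muDiff n ⬝ᵥ (Mo.Sigma n).mulVec (Mo.muDiff n))

/-- The matrix `G Ω̃ G` with `Ω̃ = (1 + n1/n2)·Ω`. -/
def tildeSigma (n : ℕ) : Matrix (Fin (Mo.p n)) (Fin (Mo.p n)) ℝ :=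
  Gmat (Mo.p n) * ((1 + (Mo.n1 n : ℝ) / (Mo.n2 n : ℝ)) • Mo.Omat n) * Gmat (Mo.p n)

/-- The dense alternative `G_d(ε0)`. -/
def denseAlt (ε0 : ℝ) (n : ℕ) : Prop :=
  ε0 * Real.log ((Mo.n1 n : ℝ) + (Mo.n2 n : ℝ)) ≤
    (Mo.n1 n : ℝ) ^ 2 * (∑ j, Mo.muDiff n j ^ 2) ^ 2 /
      ((Mo.n1 n : ℝ) *
          ((fun j => Mo.ν1 n j - Mo.ν2 n j) ⬝ᵥ
            (Mo.tildeSigma n).mulVec (fun j => Mo.ν1 n j - Mo.ν2 n j))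
        + (Mo.tildeSigma n * Mo.tildeSigma n).trace)

/-- The sparse alternative `G_s(ε0)`:
`max_j |(G(ν1−ν2))_j| / √((GΩ̃G)_{jj}) ≥ √((2+ε0)·log p / n1)`. -/
def sparseAlt (ε0 : ℝ) (n : ℕ) : Prop :=
  ∃ j : Fin (Mo.p n),
    Real.sqrt ((2 + ε0) * Real.log (Mo.p n) / (Mo.n1 n : ℝ))
      ≤ |Mo.muDiff n j| / Real.sqrt (Mo.tildeSigma n j j)

end CompModel

/-! ### Auxiliary development for the consistency proof -/

namespace CQ

variable {n1 n2 p : ℕ}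

/-- The combined family of log-basis vectors. -/
def gfam (n1 n2 p : ℕ) : (Fin n1 ⊕ Fin n2) → SampleSpace n1 n2 p → (Fin p → ℝ) :=
  Sum.elim (fun i ω => ω.1 i) (fun j ω => ω.2 j)

/-- The mean of the `s`-th log-basis vector. -/
def nuf (ν1 ν2 : Fin p → ℝ) : (Fin n1 ⊕ Fin n2) → Fin p → ℝ :=
  Sum.elim (fun _ => ν1) (fun _ => ν2)

/-- Centered CLR coordinate, as a function of the raw vector. -/
def zmap (ν1 ν2 : Fin p → ℝ) (s : Fin n1 ⊕ Fin n2) (k : Fin p) (x : Fin p → ℝ) : ℝ :=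
  ∑ a, Gmat p k a * (x a - nuf ν1 ν2 s a)

/-- Centered CLR coordinate of the `s`-th observation. -/
def zf (ν1 ν2 : Fin p → ℝ) (s : Fin n1 ⊕ Fin n2) (k : Fin p)
    (ω : SampleSpace n1 n2 p) : ℝ :=
  zmap ν1 ν2 s k (gfam n1 n2 p s ω)

/-- Model hypotheses at a fixed index. -/
structure Hyp (P : Measure (SampleSpace n1 n2 p)) (ν1 ν2 : Fin p → ℝ)
    (Om : Matrix (Fin p) (Fin p) ℝ) : Prop where
  prob : IsProbabilityMeasure P
  indep : iIndepFun (gfam n1 n2 p) P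
  int1 : ∀ s a, Integrable (fun ω => gfam n1 n2 p s ω a) P
  int2 : ∀ s a b, Integrable (fun ω => gfam n1 n2 p s ω a * gfam n1 n2 p s ω b) P
  mean : ∀ s a, (∫ ω, gfam n1 n2 p s ω a ∂P) = nuf ν1 ν2 s a
  cov : ∀ s a b, (∫ ω, (gfam n1 n2 p s ω a - nuf ν1 ν2 s a)
      * (gfam n1 n2 p s ω b - nuf ν1 ν2 s b) ∂P) = Om a b

variable {P : Measure (SampleSpace n1 n2 p)} {ν1 ν2 : Fin p → ℝ}
  {Om : Matrix (Fin p) (Fin p) ℝ}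

lemma meas_gfam (s : Fin n1 ⊕ Fin n2) : Measurable (gfam n1 n2 p s) := by
  cases s with
  | inl i => exact (measurable_pi_apply i).comp measurable_fst
  | inr j => exact (measurable_pi_apply j).comp measurable_snd

lemma meas_zmap (s : Fin n1 ⊕ Fin n2) (k : Fin p) : Measurable (zmap ν1 ν2 s k) :=
  Finset.measurable_sum _ fun a _ =>
    (((measurable_pi_apply a).sub measurable_const).const_mul _)

lemma meas_zf (s : Fin n1 ⊕ Fin n2) (k : Fin p) : Measurable (zf ν1 ν2 s k) :=
  (meas_zmap s k).comp (meas_gfam s)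

lemma int_cent (h : Hyp P ν1 ν2 Om) (s : Fin n1 ⊕ Fin n2) (a : Fin p) :
    Integrable (fun ω => gfam n1 n2 p s ω a - nuf ν1 ν2 s a) P := by
  have := h.prob
  exact (h.int1 s a).sub (integrable_const _)

lemma E_cent (h : Hyp P ν1 ν2 Om) (s : Fin n1 ⊕ Fin n2) (a : Fin p) :
    (∫ ω, (gfam n1 n2 p s ω a - nuf ν1 ν2 s a) ∂P) = 0 := by
  have := h.prob
  rw [integral_sub (h.int1 s a) (integrable_const _), h.mean, integral_const]
  simp

lemma int_cent2 (h : Hyp P ν1 ν2 Om) (s : Fin n1 ⊕ Fin n2) (a b : Fin p) :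
    Integrable (fun ω => (gfam n1 n2 p s ω a - nuf ν1 ν2 s a)
      * (gfam n1 n2 p s ω b - nuf ν1 ν2 s b)) P := by
  have := h.prob
  have hre : (fun ω => (gfam n1 n2 p s ω a - nuf ν1 ν2 s a)
      * (gfam n1 n2 p s ω b - nuf ν1 ν2 s b))
      = fun ω => gfam n1 n2 p s ω a * gfam n1 n2 p s ω b
        - nuf ν1 ν2 s a * gfam n1 n2 p s ω b
        - nuf ν1 ν2 s b * gfam n1 n2 p s ω a + nuf ν1 ν2 s a * nuf ν1 ν2 s b := by
    funext ω; ring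
  rw [hre]
  exact (((h.int2 s a b).sub ((h.int1 s b).const_mul _)).sub
    ((h.int1 s a).const_mul _)).add (integrable_const _)

lemma int_zf (h : Hyp P ν1 ν2 Om) (s : Fin n1 ⊕ Fin n2) (k : Fin p) :
    Integrable (zf ν1 ν2 s k) P := by
  unfold zf zmap
  exact integrable_finset_sum _ fun a _ => (int_cent h s a).const_mul _

lemma E_zf (h : Hyp P ν1 ν2 Om) (s : Fin n1 ⊕ Fin n2) (k : Fin p) :
    (∫ ω, zf ν1 ν2 s k ω ∂P) = 0 := by
  unfold zf zmap
  rw [integral_finset_sum _ fun a _ => (int_cent h s a).const_mul _]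
  simp only [integral_const_mul, E_cent h, mul_zero, Finset.sum_const_zero]

lemma zf_mul_expand (s t : Fin n1 ⊕ Fin n2) (k l : Fin p) :
    (fun ω => zf ν1 ν2 s k ω * zf ν1 ν2 t l ω)
      = fun ω => ∑ a, ∑ b, (Gmat p k a * Gmat p l b) *
          ((gfam n1 n2 p s ω a - nuf ν1 ν2 s a) * (gfam n1 n2 p t ω b - nuf ν1 ν2 t b)) := by
  funext ω
  rw [zf, zf, zmap, zmap, Finset.sum_mul_sum]
  refine Finset.sum_congr rfl fun a _ => Finset.sum_congr rfl fun b _ => by ring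

lemma int_zf2 (h : Hyp P ν1 ν2 Om) (s : Fin n1 ⊕ Fin n2) (k l : Fin p) :
    Integrable (fun ω => zf ν1 ν2 s k ω * zf ν1 ν2 s l ω) P := by
  rw [zf_mul_expand]
  exact integrable_finset_sum _ fun a _ => integrable_finset_sum _ fun b _ =>
    (int_cent2 h s a b).const_mul _

lemma E_zf2 (h : Hyp P ν1 ν2 Om) (s : Fin n1 ⊕ Fin n2) (k l : Fin p) :
    (∫ ω, zf ν1 ν2 s k ω * zf ν1 ν2 s l ω ∂P) = (Gmat p * Om * (Gmat p)ᵀ) k l := by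
  rw [zf_mul_expand]
  rw [integral_finset_sum _ fun a _ => integrable_finset_sum _ fun b _ =>
    (int_cent2 h s a b).const_mul _]
  have : ∀ a, (∫ ω, (∑ b, (Gmat p k a * Gmat p l b) *
      ((gfam n1 n2 p s ω a - nuf ν1 ν2 s a) * (gfam n1 n2 p s ω b - nuf ν1 ν2 s b))) ∂P)
      = ∑ b, (Gmat p k a * Gmat p l b) * Om a b := by
    intro a
    rw [integral_finset_sum _ fun b _ => (int_cent2 h s a b).const_mul _]
    refine Finset.sum_congr rfl fun b _ => ?_
    rw [integral_const_mul, h.cov]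
  simp only [this]
  simp only [Matrix.mul_apply, Matrix.transpose_apply, Finset.sum_mul]
  rw [Finset.sum_comm]
  refine Finset.sum_congr rfl fun a _ => Finset.sum_congr rfl fun b _ => by ring


section Indep

lemma E_mul11 (h : Hyp P ν1 ν2 Om) {s t : Fin n1 ⊕ Fin n2} (hst : s ≠ t)
    {φ ψ : (Fin p → ℝ) → ℝ} (mφ : Measurable φ) (mψ : Measurable ψ)
    (iφ : Integrable (fun ω => φ (gfam n1 n2 p s ω)) P)
    (iψ : Integrable (fun ω => ψ (gfam n1 n2 p t ω)) P) :
    Integrable (fun ω => φ (gfam n1 n2 p s ω) * ψ (gfam n1 n2 p t ω)) P ∧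
    (∫ ω, φ (gfam n1 n2 p s ω) * ψ (gfam n1 n2 p t ω) ∂P)
      = (∫ ω, φ (gfam n1 n2 p s ω) ∂P) * (∫ ω, ψ (gfam n1 n2 p t ω) ∂P) := by
  have hI : IndepFun (fun ω => φ (gfam n1 n2 p s ω)) (fun ω => ψ (gfam n1 n2 p t ω)) P :=
    (h.indep.indepFun hst).comp mφ mψ
  exact ⟨hI.integrable_mul iφ iψ, hI.integral_fun_mul_eq_mul_integral iφ.aestronglyMeasurable iψ.aestronglyMeasurable⟩

lemma E_mul12 (h : Hyp P ν1 ν2 Om) {s t u : Fin n1 ⊕ Fin n2} (hts : t ≠ s) (hus : u ≠ s)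
    {φ ψ χ : (Fin p → ℝ) → ℝ} (mφ : Measurable φ) (mψ : Measurable ψ) (mχ : Measurable χ)
    (iφ : Integrable (fun ω => φ (gfam n1 n2 p s ω)) P)
    (iψχ : Integrable (fun ω => ψ (gfam n1 n2 p t ω) * χ (gfam n1 n2 p u ω)) P) :
    Integrable (fun ω => ψ (gfam n1 n2 p t ω) * χ (gfam n1 n2 p u ω)
      * φ (gfam n1 n2 p s ω)) P ∧
    (∫ ω, ψ (gfam n1 n2 p t ω) * χ (gfam n1 n2 p u ω) * φ (gfam n1 n2 p s ω) ∂P)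
      = (∫ ω, ψ (gfam n1 n2 p t ω) * χ (gfam n1 n2 p u ω) ∂P)
        * (∫ ω, φ (gfam n1 n2 p s ω) ∂P) := by
  have h0 := h.indep.indepFun_prodMk (fun i => meas_gfam i) t u s hts hus
  have hI := h0.comp
    (show Measurable (fun q : (Fin p → ℝ) × (Fin p → ℝ) => ψ q.1 * χ q.2) from
      (mψ.comp measurable_fst).mul (mχ.comp measurable_snd)) mφ
  exact ⟨hI.integrable_mul iψχ iφ, hI.integral_fun_mul_eq_mul_integral iψχ.aestronglyMeasurable iφ.aestronglyMeasurable⟩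

lemma E_mul22 (h : Hyp P ν1 ν2 Om) {s t u v : Fin n1 ⊕ Fin n2}
    (hsu : s ≠ u) (hsv : s ≠ v) (htu : t ≠ u) (htv : t ≠ v)
    {φ1 φ2 ψ1 ψ2 : (Fin p → ℝ) → ℝ} (m1 : Measurable φ1) (m2 : Measurable φ2)
    (m3 : Measurable ψ1) (m4 : Measurable ψ2)
    (iφ : Integrable (fun ω => φ1 (gfam n1 n2 p s ω) * φ2 (gfam n1 n2 p t ω)) P)
    (iψ : Integrable (fun ω => ψ1 (gfam n1 n2 p u ω) * ψ2 (gfam n1 n2 p v ω)) P) :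
    Integrable (fun ω => φ1 (gfam n1 n2 p s ω) * φ2 (gfam n1 n2 p t ω)
      * (ψ1 (gfam n1 n2 p u ω) * ψ2 (gfam n1 n2 p v ω))) P ∧
    (∫ ω, φ1 (gfam n1 n2 p s ω) * φ2 (gfam n1 n2 p t ω)
        * (ψ1 (gfam n1 n2 p u ω) * ψ2 (gfam n1 n2 p v ω)) ∂P)
      = (∫ ω, φ1 (gfam n1 n2 p s ω) * φ2 (gfam n1 n2 p t ω) ∂P)
        * (∫ ω, ψ1 (gfam n1 n2 p u ω) * ψ2 (gfam n1 n2 p v ω) ∂P) := by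
  have h0 := h.indep.indepFun_prodMk_prodMk (fun i => meas_gfam i) s t u v hsu hsv htu htv
  have hI := h0.comp
    (show Measurable (fun q : (Fin p → ℝ) × (Fin p → ℝ) => φ1 q.1 * φ2 q.2) from
      (m1.comp measurable_fst).mul (m2.comp measurable_snd))
    (show Measurable (fun q : (Fin p → ℝ) × (Fin p → ℝ) => ψ1 q.1 * ψ2 q.2) from
      (m3.comp measurable_fst).mul (m4.comp measurable_snd))
  exact ⟨hI.integrable_mul iφ iψ, hI.integral_fun_mul_eq_mul_integral iφ.aestronglyMeasurable iψ.aestronglyMeasurable⟩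

lemma E_zz_ne (h : Hyp P ν1 ν2 Om) {s t : Fin n1 ⊕ Fin n2} (hst : s ≠ t) (k l : Fin p) :
    Integrable (fun ω => zf ν1 ν2 s k ω * zf ν1 ν2 t l ω) P ∧
    (∫ ω, zf ν1 ν2 s k ω * zf ν1 ν2 t l ω ∂P) = 0 := by
  have h0 := E_mul11 h hst (meas_zmap s k) (meas_zmap t l) (int_zf h s k) (int_zf h t l)
  refine ⟨h0.1, ?_⟩
  have : (∫ ω, zf ν1 ν2 s k ω * zf ν1 ν2 t l ω ∂P)
      = (∫ ω, zf ν1 ν2 s k ω ∂P) * (∫ ω, zf ν1 ν2 t l ω ∂P) := h0.2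
  rw [this, E_zf h, zero_mul]

end Indep


/-- Fourth-moment classification for products of centered coordinates from
independent blocks. -/
lemma m4 (h : Hyp P ν1 ν2 Om) {s t u v : Fin n1 ⊕ Fin n2} (hst : s ≠ t) (huv : u ≠ v)
    (k l : Fin p) :
    Integrable (fun ω => zf ν1 ν2 s k ω * zf ν1 ν2 t k ω *
      (zf ν1 ν2 u l ω * zf ν1 ν2 v l ω)) P ∧
    (∫ ω, zf ν1 ν2 s k ω * zf ν1 ν2 t k ω * (zf ν1 ν2 u l ω * zf ν1 ν2 v l ω) ∂P)
      = if (s = u ∧ t = v) ∨ (s = v ∧ t = u)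
        then (Gmat p * Om * (Gmat p)ᵀ) k l * (Gmat p * Om * (Gmat p)ᵀ) k l else 0 := by
  classical
  by_cases hsu : s = u
  · subst hsu
    by_cases htv : t = v
    · subst htv
      have hre : (fun ω => zf ν1 ν2 s k ω * zf ν1 ν2 t k ω *
          (zf ν1 ν2 s l ω * zf ν1 ν2 t l ω))
          = fun ω => zf ν1 ν2 s k ω * zf ν1 ν2 s l ω *
            (zf ν1 ν2 t k ω * zf ν1 ν2 t l ω) := by funext ω; ring
      have h0 := E_mul11 h hst ((meas_zmap s k).mul (meas_zmap s l))
        ((meas_zmap t k).mul (meas_zmap t l)) (int_zf2 h s k l) (int_zf2 h t k l)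
      refine ⟨by rw [hre]; exact h0.1, ?_⟩
      rw [hre]
      have h1 : (∫ ω, zf ν1 ν2 s k ω * zf ν1 ν2 s l ω *
          (zf ν1 ν2 t k ω * zf ν1 ν2 t l ω) ∂P)
          = (∫ ω, zf ν1 ν2 s k ω * zf ν1 ν2 s l ω ∂P)
            * (∫ ω, zf ν1 ν2 t k ω * zf ν1 ν2 t l ω ∂P) := h0.2
      rw [h1, E_zf2 h s k l, E_zf2 h t k l, if_pos (Or.inl ⟨rfl, rfl⟩)]
    · have hre : (fun ω => zf ν1 ν2 s k ω * zf ν1 ν2 t k ω *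
          (zf ν1 ν2 s l ω * zf ν1 ν2 v l ω))
          = fun ω => zf ν1 ν2 t k ω * zf ν1 ν2 v l ω *
            (zf ν1 ν2 s k ω * zf ν1 ν2 s l ω) := by funext ω; ring
      have h0 := E_mul12 h hst.symm huv.symm ((meas_zmap s k).mul (meas_zmap s l))
        (meas_zmap t k) (meas_zmap v l) (int_zf2 h s k l) (E_zz_ne h htv k l).1
      refine ⟨by rw [hre]; exact h0.1, ?_⟩
      rw [hre]
      have h1 : (∫ ω, zf ν1 ν2 t k ω * zf ν1 ν2 v l ω *
          (zf ν1 ν2 s k ω * zf ν1 ν2 s l ω) ∂P)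
          = (∫ ω, zf ν1 ν2 t k ω * zf ν1 ν2 v l ω ∂P)
            * (∫ ω, zf ν1 ν2 s k ω * zf ν1 ν2 s l ω ∂P) := h0.2
      rw [h1, (E_zz_ne h htv k l).2, zero_mul,
        if_neg (by rintro (⟨-, h2⟩ | ⟨h2, -⟩); exacts [htv h2, huv h2])]
  · by_cases hsv : s = v
    · subst hsv
      by_cases htu : t = u
      · subst htu
        have hre : (fun ω => zf ν1 ν2 s k ω * zf ν1 ν2 t k ω *
            (zf ν1 ν2 t l ω * zf ν1 ν2 s l ω))
            = fun ω => zf ν1 ν2 s k ω * zf ν1 ν2 s l ω *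
              (zf ν1 ν2 t k ω * zf ν1 ν2 t l ω) := by funext ω; ring
        have h0 := E_mul11 h hst ((meas_zmap s k).mul (meas_zmap s l))
          ((meas_zmap t k).mul (meas_zmap t l)) (int_zf2 h s k l) (int_zf2 h t k l)
        refine ⟨by rw [hre]; exact h0.1, ?_⟩
        rw [hre]
        have h1 : (∫ ω, zf ν1 ν2 s k ω * zf ν1 ν2 s l ω *
            (zf ν1 ν2 t k ω * zf ν1 ν2 t l ω) ∂P)
            = (∫ ω, zf ν1 ν2 s k ω * zf ν1 ν2 s l ω ∂P)
              * (∫ ω, zf ν1 ν2 t k ω * zf ν1 ν2 t l ω ∂P) := h0.2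
        rw [h1, E_zf2 h s k l, E_zf2 h t k l, if_pos (Or.inr ⟨rfl, rfl⟩)]
      · have hre : (fun ω => zf ν1 ν2 s k ω * zf ν1 ν2 t k ω *
            (zf ν1 ν2 u l ω * zf ν1 ν2 s l ω))
            = fun ω => zf ν1 ν2 t k ω * zf ν1 ν2 u l ω *
              (zf ν1 ν2 s k ω * zf ν1 ν2 s l ω) := by funext ω; ring
        have h0 := E_mul12 h hst.symm huv ((meas_zmap s k).mul (meas_zmap s l))
          (meas_zmap t k) (meas_zmap u l) (int_zf2 h s k l) (E_zz_ne h htu k l).1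
        refine ⟨by rw [hre]; exact h0.1, ?_⟩
        rw [hre]
        have h1 : (∫ ω, zf ν1 ν2 t k ω * zf ν1 ν2 u l ω *
            (zf ν1 ν2 s k ω * zf ν1 ν2 s l ω) ∂P)
            = (∫ ω, zf ν1 ν2 t k ω * zf ν1 ν2 u l ω ∂P)
              * (∫ ω, zf ν1 ν2 s k ω * zf ν1 ν2 s l ω ∂P) := h0.2
        rw [h1, (E_zz_ne h htu k l).2, zero_mul,
          if_neg (by rintro (⟨h2, -⟩ | ⟨-, h2⟩); exacts [hsu h2, htu h2])]
    · by_cases htu : t = u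
      · subst htu
        have hre : (fun ω => zf ν1 ν2 s k ω * zf ν1 ν2 t k ω *
            (zf ν1 ν2 t l ω * zf ν1 ν2 v l ω))
            = fun ω => zf ν1 ν2 s k ω * zf ν1 ν2 v l ω *
              (zf ν1 ν2 t k ω * zf ν1 ν2 t l ω) := by funext ω; ring
        have h0 := E_mul12 h hst huv.symm ((meas_zmap t k).mul (meas_zmap t l))
          (meas_zmap s k) (meas_zmap v l) (int_zf2 h t k l) (E_zz_ne h hsv k l).1
        refine ⟨by rw [hre]; exact h0.1, ?_⟩
        rw [hre]
        have h1 : (∫ ω, zf ν1 ν2 s k ω * zf ν1 ν2 v l ω *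
            (zf ν1 ν2 t k ω * zf ν1 ν2 t l ω) ∂P)
            = (∫ ω, zf ν1 ν2 s k ω * zf ν1 ν2 v l ω ∂P)
              * (∫ ω, zf ν1 ν2 t k ω * zf ν1 ν2 t l ω ∂P) := h0.2
        rw [h1, (E_zz_ne h hsv k l).2, zero_mul,
          if_neg (by rintro (⟨h2, -⟩ | ⟨h2, -⟩); exacts [hst h2, hsv h2])]
      · by_cases htv : t = v
        · subst htv
          have hre : (fun ω => zf ν1 ν2 s k ω * zf ν1 ν2 t k ω *
              (zf ν1 ν2 u l ω * zf ν1 ν2 t l ω))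
              = fun ω => zf ν1 ν2 s k ω * zf ν1 ν2 u l ω *
                (zf ν1 ν2 t k ω * zf ν1 ν2 t l ω) := by funext ω; ring
          have h0 := E_mul12 h hst huv ((meas_zmap t k).mul (meas_zmap t l))
            (meas_zmap s k) (meas_zmap u l) (int_zf2 h t k l) (E_zz_ne h hsu k l).1
          refine ⟨by rw [hre]; exact h0.1, ?_⟩
          rw [hre]
          have h1 : (∫ ω, zf ν1 ν2 s k ω * zf ν1 ν2 u l ω *
              (zf ν1 ν2 t k ω * zf ν1 ν2 t l ω) ∂P)
              = (∫ ω, zf ν1 ν2 s k ω * zf ν1 ν2 u l ω ∂P)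
                * (∫ ω, zf ν1 ν2 t k ω * zf ν1 ν2 t l ω ∂P) := h0.2
          rw [h1, (E_zz_ne h hsu k l).2, zero_mul,
            if_neg (by rintro (⟨h2, -⟩ | ⟨h2, -⟩); exacts [hsu h2, hst h2])]
        · have h0 := E_mul22 h hsu hsv htu htv (meas_zmap s k) (meas_zmap t k)
            (meas_zmap u l) (meas_zmap v l) (E_zz_ne h hst k k).1 (E_zz_ne h huv l l).1
          refine ⟨h0.1, ?_⟩
          have h1 : (∫ ω, zf ν1 ν2 s k ω * zf ν1 ν2 t k ω *
              (zf ν1 ν2 u l ω * zf ν1 ν2 v l ω) ∂P)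
              = (∫ ω, zf ν1 ν2 s k ω * zf ν1 ν2 t k ω ∂P)
                * (∫ ω, zf ν1 ν2 u l ω * zf ν1 ν2 v l ω ∂P) := h0.2
          rw [h1, (E_zz_ne h hst k k).2, zero_mul,
            if_neg (by rintro (⟨h2, -⟩ | ⟨h2, -⟩); exacts [hsu h2, hsv h2])]


/-! ### The centered quadratic and linear components -/

def cc (n1 n2 : ℕ) : (Fin n1 ⊕ Fin n2) → (Fin n1 ⊕ Fin n2) → ℝ
  | Sum.inl i, Sum.inl j => if i = j then 0 else ((n1 : ℝ) * ((n1 : ℝ) - 1))⁻¹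
  | Sum.inr i, Sum.inr j => if i = j then 0 else ((n2 : ℝ) * ((n2 : ℝ) - 1))⁻¹
  | _, _ => -((n1 : ℝ) * (n2 : ℝ))⁻¹

lemma cc_ll (i j : Fin n1) :
    cc n1 n2 (Sum.inl i) (Sum.inl j) = if i = j then 0 else ((n1 : ℝ) * ((n1 : ℝ) - 1))⁻¹ := rfl
lemma cc_rr (i j : Fin n2) :
    cc n1 n2 (Sum.inr i) (Sum.inr j) = if i = j then 0 else ((n2 : ℝ) * ((n2 : ℝ) - 1))⁻¹ := rfl
lemma cc_lr (i : Fin n1) (j : Fin n2) :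
    cc n1 n2 (Sum.inl i) (Sum.inr j) = -((n1 : ℝ) * (n2 : ℝ))⁻¹ := rfl
lemma cc_rl (i : Fin n2) (j : Fin n1) :
    cc n1 n2 (Sum.inr i) (Sum.inl j) = -((n1 : ℝ) * (n2 : ℝ))⁻¹ := rfl

lemma cc_diag (s : Fin n1 ⊕ Fin n2) : cc n1 n2 s s = 0 := by
  cases s <;> simp [cc_ll, cc_rr]

lemma cc_diag' {s t : Fin n1 ⊕ Fin n2} (hst : s = t) : cc n1 n2 s t = 0 := by
  rw [hst, cc_diag]

lemma cc_symm (s t : Fin n1 ⊕ Fin n2) : cc n1 n2 s t = cc n1 n2 t s := by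
  cases s <;> cases t <;> simp [cc_ll, cc_rr, cc_lr, cc_rl, eq_comm]

def dd (n1 n2 : ℕ) : (Fin n1 ⊕ Fin n2) → ℝ :=
  Sum.elim (fun _ => 2 / (n1 : ℝ)) (fun _ => -(2 / (n2 : ℝ)))

def zeta (ν1 ν2 : Fin p → ℝ) (s t : Fin n1 ⊕ Fin n2) (ω : SampleSpace n1 n2 p) : ℝ :=
  ∑ k, zf ν1 ν2 s k ω * zf ν1 ν2 t k ω

def Ustat (ν1 ν2 : Fin p → ℝ) (ω : SampleSpace n1 n2 p) : ℝ :=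
  ∑ s, ∑ t, cc n1 n2 s t * zeta ν1 ν2 s t ω

def mud (ν1 ν2 : Fin p → ℝ) : Fin p → ℝ := (Gmat p).mulVec (fun j => ν1 j - ν2 j)

def eta (ν1 ν2 : Fin p → ℝ) (s : Fin n1 ⊕ Fin n2) (ω : SampleSpace n1 n2 p) : ℝ :=
  ∑ k, mud ν1 ν2 k * zf ν1 ν2 s k ω

def Lstat (ν1 ν2 : Fin p → ℝ) (ω : SampleSpace n1 n2 p) : ℝ :=
  ∑ s, dd n1 n2 s * eta ν1 ν2 s ω

def trq {p : ℕ} (Om : Matrix (Fin p) (Fin p) ℝ) : ℝ :=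
  ∑ k, ∑ l, (Gmat p * Om * (Gmat p)ᵀ) k l * (Gmat p * Om * (Gmat p)ᵀ) k l

def bq (ν1 ν2 : Fin p → ℝ) (Om : Matrix (Fin p) (Fin p) ℝ) : ℝ :=
  ∑ k, ∑ l, (mud ν1 ν2 k * mud ν1 ν2 l) * (Gmat p * Om * (Gmat p)ᵀ) k l

lemma trq_nonneg (Om : Matrix (Fin p) (Fin p) ℝ) : 0 ≤ trq Om :=
  Finset.sum_nonneg fun k _ => Finset.sum_nonneg fun l _ => mul_self_nonneg _

/-! ### Second moment of the quadratic component -/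

lemma zeta_mul_expand (s t u v : Fin n1 ⊕ Fin n2) :
    (fun ω => zeta ν1 ν2 s t ω * zeta ν1 ν2 u v ω)
      = fun ω : SampleSpace n1 n2 p => ∑ k, ∑ l,
          zf ν1 ν2 s k ω * zf ν1 ν2 t k ω * (zf ν1 ν2 u l ω * zf ν1 ν2 v l ω) := by
  funext ω
  rw [zeta, zeta, Finset.sum_mul_sum]

lemma int_zeta_mul (h : Hyp P ν1 ν2 Om) {s t u v : Fin n1 ⊕ Fin n2}
    (hst : s ≠ t) (huv : u ≠ v) :
    Integrable (fun ω => zeta ν1 ν2 s t ω * zeta ν1 ν2 u v ω) P := by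
  rw [zeta_mul_expand]
  exact integrable_finset_sum _ fun k _ => integrable_finset_sum _ fun l _ =>
    (m4 h hst huv k l).1

lemma E_zeta_mul (h : Hyp P ν1 ν2 Om) {s t u v : Fin n1 ⊕ Fin n2}
    (hst : s ≠ t) (huv : u ≠ v) :
    (∫ ω, zeta ν1 ν2 s t ω * zeta ν1 ν2 u v ω ∂P)
      = if (s = u ∧ t = v) ∨ (s = v ∧ t = u) then trq Om else 0 := by
  rw [zeta_mul_expand, integral_finset_sum _ (fun k _ =>
    integrable_finset_sum _ fun l _ => (m4 h hst huv k l).1)]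
  have hk : ∀ k, (∫ ω, (∑ l, zf ν1 ν2 s k ω * zf ν1 ν2 t k ω *
      (zf ν1 ν2 u l ω * zf ν1 ν2 v l ω)) ∂P)
      = ∑ l, if (s = u ∧ t = v) ∨ (s = v ∧ t = u)
          then (Gmat p * Om * (Gmat p)ᵀ) k l * (Gmat p * Om * (Gmat p)ᵀ) k l else 0 := by
    intro k
    rw [integral_finset_sum _ fun l _ => (m4 h hst huv k l).1]
    exact Finset.sum_congr rfl fun l _ => (m4 h hst huv k l).2
  simp only [hk]
  by_cases hc : (s = u ∧ t = v) ∨ (s = v ∧ t = u) <;> simp [hc, trq]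

lemma U_apply (ω : SampleSpace n1 n2 p) : Ustat ν1 ν2 ω
    = ∑ q : (Fin n1 ⊕ Fin n2) × (Fin n1 ⊕ Fin n2),
        cc n1 n2 q.1 q.2 * zeta ν1 ν2 q.1 q.2 ω := by
  exact (Fintype.sum_prod_type
    (f := fun q : (Fin n1 ⊕ Fin n2) × (Fin n1 ⊕ Fin n2) =>
      cc n1 n2 q.1 q.2 * zeta ν1 ν2 q.1 q.2 ω)).symm

lemma int_U_term (h : Hyp P ν1 ν2 Om)
    (q r : (Fin n1 ⊕ Fin n2) × (Fin n1 ⊕ Fin n2)) :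
    Integrable (fun ω => cc n1 n2 q.1 q.2 * zeta ν1 ν2 q.1 q.2 ω
      * (cc n1 n2 r.1 r.2 * zeta ν1 ν2 r.1 r.2 ω)) P := by
  have := h.prob
  by_cases hq : q.1 = q.2
  · have hz : (fun ω => cc n1 n2 q.1 q.2 * zeta ν1 ν2 q.1 q.2 ω
        * (cc n1 n2 r.1 r.2 * zeta ν1 ν2 r.1 r.2 ω)) = fun _ => (0:ℝ) := by
      funext ω; rw [cc_diag' hq]; ring
    rw [hz]; exact integrable_const 0
  · by_cases hr : r.1 = r.2
    · have hz : (fun ω => cc n1 n2 q.1 q.2 * zeta ν1 ν2 q.1 q.2 ω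
          * (cc n1 n2 r.1 r.2 * zeta ν1 ν2 r.1 r.2 ω)) = fun _ => (0:ℝ) := by
        funext ω; rw [cc_diag' hr]; ring
      rw [hz]; exact integrable_const 0
    · have hre : (fun ω => cc n1 n2 q.1 q.2 * zeta ν1 ν2 q.1 q.2 ω
          * (cc n1 n2 r.1 r.2 * zeta ν1 ν2 r.1 r.2 ω))
          = fun ω => (cc n1 n2 q.1 q.2 * cc n1 n2 r.1 r.2)
              * (zeta ν1 ν2 q.1 q.2 ω * zeta ν1 ν2 r.1 r.2 ω) := by
        funext ω; ring
      rw [hre]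
      exact (int_zeta_mul h hq hr).const_mul _

lemma E_U_term (h : Hyp P ν1 ν2 Om)
    (q r : (Fin n1 ⊕ Fin n2) × (Fin n1 ⊕ Fin n2)) :
    (∫ ω, cc n1 n2 q.1 q.2 * zeta ν1 ν2 q.1 q.2 ω
      * (cc n1 n2 r.1 r.2 * zeta ν1 ν2 r.1 r.2 ω) ∂P)
      = cc n1 n2 q.1 q.2 * cc n1 n2 r.1 r.2 *
          (if (q.1 = r.1 ∧ q.2 = r.2) ∨ (q.1 = r.2 ∧ q.2 = r.1) then trq Om else 0) := by
  by_cases hq : q.1 = q.2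
  · have hz : (fun ω => cc n1 n2 q.1 q.2 * zeta ν1 ν2 q.1 q.2 ω
        * (cc n1 n2 r.1 r.2 * zeta ν1 ν2 r.1 r.2 ω)) = fun _ : SampleSpace n1 n2 p => (0:ℝ) := by
      funext ω; rw [cc_diag' hq]; ring
    rw [hz, integral_const, cc_diag' hq]
    simp
  · by_cases hr : r.1 = r.2
    · have hz : (fun ω => cc n1 n2 q.1 q.2 * zeta ν1 ν2 q.1 q.2 ω
          * (cc n1 n2 r.1 r.2 * zeta ν1 ν2 r.1 r.2 ω)) = fun _ : SampleSpace n1 n2 p => (0:ℝ) := by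
        funext ω; rw [cc_diag' hr]; ring
      rw [hz, integral_const, cc_diag' hr]
      simp
    · have hre : (fun ω => cc n1 n2 q.1 q.2 * zeta ν1 ν2 q.1 q.2 ω
          * (cc n1 n2 r.1 r.2 * zeta ν1 ν2 r.1 r.2 ω))
          = fun ω => (cc n1 n2 q.1 q.2 * cc n1 n2 r.1 r.2)
              * (zeta ν1 ν2 q.1 q.2 ω * zeta ν1 ν2 r.1 r.2 ω) := by
        funext ω; ring
      rw [hre, integral_const_mul, E_zeta_mul h hq hr]

lemma E_U_row (h : Hyp P ν1 ν2 Om) (q : (Fin n1 ⊕ Fin n2) × (Fin n1 ⊕ Fin n2)) :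
    (∑ r : (Fin n1 ⊕ Fin n2) × (Fin n1 ⊕ Fin n2), cc n1 n2 q.1 q.2 * cc n1 n2 r.1 r.2 *
        (if (q.1 = r.1 ∧ q.2 = r.2) ∨ (q.1 = r.2 ∧ q.2 = r.1) then trq Om else 0))
      = 2 * cc n1 n2 q.1 q.2 ^ 2 * trq Om := by
  by_cases hq : q.1 = q.2
  · simp [cc_diag' hq]
  · have hrw : ∀ r : (Fin n1 ⊕ Fin n2) × (Fin n1 ⊕ Fin n2),
        cc n1 n2 q.1 q.2 * cc n1 n2 r.1 r.2 *
          (if (q.1 = r.1 ∧ q.2 = r.2) ∨ (q.1 = r.2 ∧ q.2 = r.1) then trq Om else 0)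
        = if r ∈ ({q, (q.2, q.1)} : Finset _) then
            cc n1 n2 q.1 q.2 * cc n1 n2 r.1 r.2 * trq Om else 0 := by
      intro r
      by_cases hmem : (q.1 = r.1 ∧ q.2 = r.2) ∨ (q.1 = r.2 ∧ q.2 = r.1)
      · rw [if_pos hmem, if_pos]
        rcases hmem with ⟨ha, hb⟩ | ⟨ha, hb⟩
        · have : r = q := Prod.ext ha.symm hb.symm
          simp [this]
        · have : r = (q.2, q.1) := Prod.ext hb.symm ha.symm
          simp [this]
      · rw [if_neg hmem, mul_zero, if_neg]
        intro hmem'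
        rcases Finset.mem_insert.1 hmem' with hr | hr
        · exact hmem (Or.inl ⟨(congrArg Prod.fst hr).symm, (congrArg Prod.snd hr).symm⟩)
        · have hr' := Finset.mem_singleton.1 hr
          exact hmem (Or.inr ⟨(congrArg Prod.snd hr').symm, (congrArg Prod.fst hr').symm⟩)
    rw [Finset.sum_congr rfl fun r _ => hrw r, Finset.sum_ite_mem, Finset.univ_inter,
      Finset.sum_pair (fun hh : q = (q.2, q.1) => hq (congrArg Prod.fst hh))]
    rw [show cc n1 n2 (q.2, q.1).1 (q.2, q.1).2 = cc n1 n2 q.1 q.2 from (cc_symm _ _).symm]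
    ring

lemma sum_ite_ne_const {N : ℕ} (i : Fin N) (w : ℝ) :
    ∑ j : Fin N, (if i = j then 0 else w) = ((N : ℝ) - 1) * w := by
  have hrw : ∀ j, (if i = j then (0:ℝ) else w) = w - (if i = j then w else 0) := by
    intro j; by_cases hj : i = j <;> simp [hj]
  simp only [hrw]
  rw [Finset.sum_sub_distrib, Finset.sum_const, Finset.sum_ite_eq, if_pos (Finset.mem_univ i)]
  simp [Finset.card_univ, nsmul_eq_mul]
  ring

lemma sum_cc_sq (h1 : 2 ≤ n1) (h2 : 2 ≤ n2) :
    (∑ s, ∑ t, cc n1 n2 s t ^ 2)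
      = ((n1 : ℝ) * ((n1 : ℝ) - 1))⁻¹ + ((n2 : ℝ) * ((n2 : ℝ) - 1))⁻¹
        + 2 * ((n1 : ℝ) * (n2 : ℝ))⁻¹ := by
  have hn1 : (1:ℝ) ≤ (n1:ℝ) := by exact_mod_cast le_trans one_le_two h1
  have hn2 : (1:ℝ) ≤ (n2:ℝ) := by exact_mod_cast le_trans one_le_two h2
  have h2n1 : (2:ℝ) ≤ (n1:ℝ) := by exact_mod_cast h1
  have h2n2 : (2:ℝ) ≤ (n2:ℝ) := by exact_mod_cast h2
  have ha : (n1:ℝ) ≠ 0 := by linarith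
  have hb : (n1:ℝ) - 1 ≠ 0 := by intro hh; rw [sub_eq_zero] at hh; linarith [hh.symm ▸ h2n1]
  have hc : (n2:ℝ) ≠ 0 := by linarith
  have hd : (n2:ℝ) - 1 ≠ 0 := by intro hh; rw [sub_eq_zero] at hh; linarith [hh.symm ▸ h2n2]
  have hsq : ∀ (N : ℕ) (w : ℝ) (i j : Fin N), ((if i = j then 0 else w) ^ 2)
      = if i = j then 0 else w ^ 2 := by
    intro N w i j; by_cases hj : i = j <;> simp [hj]
  have e1 : ∀ i : Fin n1, (∑ t : Fin n1 ⊕ Fin n2, cc n1 n2 (Sum.inl i) t ^ 2)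
      = ((n1 : ℝ) - 1) * (((n1 : ℝ) * ((n1 : ℝ) - 1))⁻¹) ^ 2
        + (n2 : ℝ) * (((n1 : ℝ) * (n2 : ℝ))⁻¹) ^ 2 := by
    intro i
    rw [Fintype.sum_sum_type]
    congr 1
    · simp only [cc_ll, hsq]
      exact sum_ite_ne_const i _
    · simp only [cc_lr, neg_sq]
      rw [Finset.sum_const, Finset.card_univ, Fintype.card_fin, nsmul_eq_mul]
  have e2 : ∀ j : Fin n2, (∑ t : Fin n1 ⊕ Fin n2, cc n1 n2 (Sum.inr j) t ^ 2)
      = (n1 : ℝ) * (((n1 : ℝ) * (n2 : ℝ))⁻¹) ^ 2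
        + ((n2 : ℝ) - 1) * (((n2 : ℝ) * ((n2 : ℝ) - 1))⁻¹) ^ 2 := by
    intro j
    rw [Fintype.sum_sum_type]
    congr 1
    · simp only [cc_rl, neg_sq]
      rw [Finset.sum_const, Finset.card_univ, Fintype.card_fin, nsmul_eq_mul]
    · simp only [cc_rr, hsq]
      exact sum_ite_ne_const j _
  rw [Fintype.sum_sum_type]
  simp only [e1, e2]
  rw [Finset.sum_const, Finset.sum_const, Finset.card_univ, Finset.card_univ,
    Fintype.card_fin, Fintype.card_fin, nsmul_eq_mul, nsmul_eq_mul]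
  have key1 : (n1 : ℝ) * (((n1 : ℝ) - 1) * (((n1 : ℝ) * ((n1 : ℝ) - 1))⁻¹) ^ 2)
      = ((n1 : ℝ) * ((n1 : ℝ) - 1))⁻¹ := by
    rw [sq]
    field_simp
  have key2 : (n2 : ℝ) * (((n2 : ℝ) - 1) * (((n2 : ℝ) * ((n2 : ℝ) - 1))⁻¹) ^ 2)
      = ((n2 : ℝ) * ((n2 : ℝ) - 1))⁻¹ := by
    rw [sq]
    field_simp
  have key3 : (n1 : ℝ) * ((n2 : ℝ) * (((n1 : ℝ) * (n2 : ℝ))⁻¹) ^ 2)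
      = ((n1 : ℝ) * (n2 : ℝ))⁻¹ := by
    rw [sq]
    field_simp
  calc (n1:ℝ) * (((n1 : ℝ) - 1) * (((n1 : ℝ) * ((n1 : ℝ) - 1))⁻¹) ^ 2
        + (n2 : ℝ) * (((n1 : ℝ) * (n2 : ℝ))⁻¹) ^ 2)
      + (n2:ℝ) * ((n1 : ℝ) * (((n1 : ℝ) * (n2 : ℝ))⁻¹) ^ 2
        + ((n2 : ℝ) - 1) * (((n2 : ℝ) * ((n2 : ℝ) - 1))⁻¹) ^ 2)
      = (n1:ℝ) * (((n1 : ℝ) - 1) * (((n1 : ℝ) * ((n1 : ℝ) - 1))⁻¹) ^ 2)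
        + (n2:ℝ) * (((n2 : ℝ) - 1) * (((n2 : ℝ) * ((n2 : ℝ) - 1))⁻¹) ^ 2)
        + 2 * ((n1 : ℝ) * ((n2 : ℝ) * (((n1 : ℝ) * (n2 : ℝ))⁻¹) ^ 2)) := by ring
    _ = _ := by rw [key1, key2, key3]

/-- `Σ` is a symmetric matrix. -/
lemma Sig_symm (h : Hyp P ν1 ν2 Om) (hn : 0 < n1) (k l : Fin p) :
    (Gmat p * Om * (Gmat p)ᵀ) k l = (Gmat p * Om * (Gmat p)ᵀ) l k := by
  set s0 : Fin n1 ⊕ Fin n2 := Sum.inl ⟨0, hn⟩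
  rw [← E_zf2 h s0 k l, ← E_zf2 h s0 l k]
  have : (fun ω => zf ν1 ν2 s0 k ω * zf ν1 ν2 s0 l ω)
      = fun ω => zf ν1 ν2 s0 l ω * zf ν1 ν2 s0 k ω := by
    funext ω; ring
  rw [this]

lemma trace_eq_trq (h : Hyp P ν1 ν2 Om) (hn : 0 < n1) :
    ((Gmat p * Om * (Gmat p)ᵀ) * (Gmat p * Om * (Gmat p)ᵀ)).trace = trq Om := by
  set A := Gmat p * Om * (Gmat p)ᵀ with hA
  have hsym : ∀ k l, A k l = A l k := by
    intro k l; rw [hA]; exact Sig_symm h hn k l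
  rw [Matrix.trace]
  simp only [Matrix.diag, Matrix.mul_apply]
  have : trq Om = ∑ k, ∑ l, A k l * A k l := rfl
  rw [this]
  refine Finset.sum_congr rfl fun k _ => Finset.sum_congr rfl fun l _ => ?_
  rw [hsym l k]

lemma int_U_sq (h : Hyp P ν1 ν2 Om) :
    Integrable (fun ω => Ustat ν1 ν2 ω ^ 2) P := by
  have hre : (fun ω => Ustat ν1 ν2 ω ^ 2)
      = fun ω : SampleSpace n1 n2 p =>
          ∑ q : (Fin n1 ⊕ Fin n2) × (Fin n1 ⊕ Fin n2),
            ∑ r : (Fin n1 ⊕ Fin n2) × (Fin n1 ⊕ Fin n2), cc n1 n2 q.1 q.2 *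
            zeta ν1 ν2 q.1 q.2 ω * (cc n1 n2 r.1 r.2 * zeta ν1 ν2 r.1 r.2 ω) := by
    funext ω
    rw [U_apply, sq, Finset.sum_mul_sum]
  rw [hre]
  exact integrable_finset_sum _ fun q _ => integrable_finset_sum _ fun r _ => int_U_term h q r

lemma EU2 (h : Hyp P ν1 ν2 Om) (h1 : 2 ≤ n1) (h2 : 2 ≤ n2) :
    (∫ ω, Ustat ν1 ν2 ω ^ 2 ∂P) = sigma2 n1 n2 (Gmat p * Om * (Gmat p)ᵀ) := by
  have hre : (fun ω => Ustat ν1 ν2 ω ^ 2)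
      = fun ω : SampleSpace n1 n2 p =>
          ∑ q : (Fin n1 ⊕ Fin n2) × (Fin n1 ⊕ Fin n2),
            ∑ r : (Fin n1 ⊕ Fin n2) × (Fin n1 ⊕ Fin n2), cc n1 n2 q.1 q.2 *
            zeta ν1 ν2 q.1 q.2 ω * (cc n1 n2 r.1 r.2 * zeta ν1 ν2 r.1 r.2 ω) := by
    funext ω
    rw [U_apply, sq, Finset.sum_mul_sum]
  rw [hre, integral_finset_sum _ fun q _ =>
    integrable_finset_sum _ fun r _ => int_U_term h q r]
  have hq : ∀ q : (Fin n1 ⊕ Fin n2) × (Fin n1 ⊕ Fin n2),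
      (∫ ω, (∑ r : (Fin n1 ⊕ Fin n2) × (Fin n1 ⊕ Fin n2), cc n1 n2 q.1 q.2 *
        zeta ν1 ν2 q.1 q.2 ω * (cc n1 n2 r.1 r.2 * zeta ν1 ν2 r.1 r.2 ω)) ∂P)
      = 2 * cc n1 n2 q.1 q.2 ^ 2 * trq Om := by
    intro q
    rw [integral_finset_sum _ fun r _ => int_U_term h q r]
    rw [Finset.sum_congr rfl fun r _ => E_U_term h q r]
    exact E_U_row h q
  rw [Finset.sum_congr rfl fun q _ => hq q]
  simp only [Fintype.sum_prod_type]
  have : (∑ s, ∑ t, 2 * cc n1 n2 s t ^ 2 * trq Om)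
      = 2 * trq Om * (∑ s, ∑ t, cc n1 n2 s t ^ 2) := by
    rw [Finset.mul_sum]
    refine Finset.sum_congr rfl fun s _ => ?_
    rw [Finset.mul_sum]
    exact Finset.sum_congr rfl fun t _ => by ring
  rw [this, sum_cc_sq h1 h2, sigma2, trace_eq_trq h (lt_of_lt_of_le Nat.zero_lt_two h1)]
  ring


/-! ### Second moment of the linear component -/

lemma eta_mul_expand (s t : Fin n1 ⊕ Fin n2) :
    (fun ω => eta ν1 ν2 s ω * eta ν1 ν2 t ω)
      = fun ω : SampleSpace n1 n2 p => ∑ k, ∑ l,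
          (mud ν1 ν2 k * mud ν1 ν2 l) * (zf ν1 ν2 s k ω * zf ν1 ν2 t l ω) := by
  funext ω
  rw [eta, eta, Finset.sum_mul_sum]
  exact Finset.sum_congr rfl fun k _ => Finset.sum_congr rfl fun l _ => by ring

lemma int_eta_term (h : Hyp P ν1 ν2 Om) (s t : Fin n1 ⊕ Fin n2) (k l : Fin p) :
    Integrable (fun ω => (mud ν1 ν2 k * mud ν1 ν2 l)
      * (zf ν1 ν2 s k ω * zf ν1 ν2 t l ω)) P := by
  by_cases hst : s = t
  · subst hst; exact (int_zf2 h s k l).const_mul _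
  · exact ((E_zz_ne h hst k l).1).const_mul _

lemma int_eta_mul (h : Hyp P ν1 ν2 Om) (s t : Fin n1 ⊕ Fin n2) :
    Integrable (fun ω => eta ν1 ν2 s ω * eta ν1 ν2 t ω) P := by
  rw [eta_mul_expand]
  exact integrable_finset_sum _ fun k _ => integrable_finset_sum _ fun l _ =>
    int_eta_term h s t k l

lemma E_eta_mul (h : Hyp P ν1 ν2 Om) (s t : Fin n1 ⊕ Fin n2) :
    (∫ ω, eta ν1 ν2 s ω * eta ν1 ν2 t ω ∂P) = if s = t then bq ν1 ν2 Om else 0 := by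
  rw [eta_mul_expand, integral_finset_sum _ fun k _ =>
    integrable_finset_sum _ fun l _ => int_eta_term h s t k l]
  have hk : ∀ k, (∫ ω, (∑ l, (mud ν1 ν2 k * mud ν1 ν2 l)
      * (zf ν1 ν2 s k ω * zf ν1 ν2 t l ω)) ∂P)
      = ∑ l, (mud ν1 ν2 k * mud ν1 ν2 l)
          * (if s = t then (Gmat p * Om * (Gmat p)ᵀ) k l else 0) := by
    intro k
    rw [integral_finset_sum _ fun l _ => int_eta_term h s t k l]
    refine Finset.sum_congr rfl fun l _ => ?_
    rw [integral_const_mul]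
    congr 1
    by_cases hst : s = t
    · subst hst; rw [E_zf2 h s k l, if_pos rfl]
    · rw [(E_zz_ne h hst k l).2, if_neg hst]
  simp only [hk]
  by_cases hst : s = t <;> simp [hst, bq]

lemma bq_nonneg (h : Hyp P ν1 ν2 Om) (hn : 0 < n1) : 0 ≤ bq ν1 ν2 Om := by
  have h0 := E_eta_mul h (Sum.inl (⟨0, hn⟩ : Fin n1)) (Sum.inl ⟨0, hn⟩)
  rw [if_pos rfl] at h0
  rw [← h0]
  exact integral_nonneg fun ω => mul_self_nonneg _

lemma L_sq_expand : (fun ω => Lstat ν1 ν2 ω ^ 2)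
    = fun ω : SampleSpace n1 n2 p => ∑ s, ∑ t,
        (dd n1 n2 s * dd n1 n2 t) * (eta ν1 ν2 s ω * eta ν1 ν2 t ω) := by
  funext ω
  rw [show Lstat ν1 ν2 ω = ∑ s, dd n1 n2 s * eta ν1 ν2 s ω from rfl, sq,
    Finset.sum_mul_sum]
  exact Finset.sum_congr rfl fun s _ => Finset.sum_congr rfl fun t _ => by ring

lemma int_L_sq (h : Hyp P ν1 ν2 Om) :
    Integrable (fun ω => Lstat ν1 ν2 ω ^ 2) P := by
  rw [L_sq_expand]
  exact integrable_finset_sum _ fun s _ => integrable_finset_sum _ fun t _ =>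
    (int_eta_mul h s t).const_mul _

lemma EL2 (h : Hyp P ν1 ν2 Om) (h1 : 2 ≤ n1) (h2 : 2 ≤ n2) :
    (∫ ω, Lstat ν1 ν2 ω ^ 2 ∂P)
      = 4 * (((n1 : ℝ) + (n2 : ℝ)) / ((n1 : ℝ) * (n2 : ℝ))) * bq ν1 ν2 Om := by
  have ha : (n1:ℝ) ≠ 0 := by
    have : (0:ℝ) < (n1:ℝ) := by exact_mod_cast lt_of_lt_of_le Nat.zero_lt_two h1
    linarith
  have hc : (n2:ℝ) ≠ 0 := by
    have : (0:ℝ) < (n2:ℝ) := by exact_mod_cast lt_of_lt_of_le Nat.zero_lt_two h2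
    linarith
  rw [L_sq_expand, integral_finset_sum _ fun s _ =>
    integrable_finset_sum _ fun t _ => (int_eta_mul h s t).const_mul _]
  have hs : ∀ s : Fin n1 ⊕ Fin n2, (∫ ω, (∑ t, (dd n1 n2 s * dd n1 n2 t)
      * (eta ν1 ν2 s ω * eta ν1 ν2 t ω)) ∂P) = dd n1 n2 s ^ 2 * bq ν1 ν2 Om := by
    intro s
    rw [integral_finset_sum _ fun t _ => (int_eta_mul h s t).const_mul _]
    have : ∀ t, (∫ ω, (dd n1 n2 s * dd n1 n2 t) * (eta ν1 ν2 s ω * eta ν1 ν2 t ω) ∂P)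
        = if s = t then dd n1 n2 s * dd n1 n2 t * bq ν1 ν2 Om else 0 := by
      intro t
      rw [integral_const_mul, E_eta_mul h s t]
      by_cases hst : s = t <;> simp [hst]
    rw [Finset.sum_congr rfl fun t _ => this t, Finset.sum_ite_eq, if_pos (Finset.mem_univ s)]
    ring
  rw [Finset.sum_congr rfl fun s _ => hs s]
  have : (∑ s : Fin n1 ⊕ Fin n2, dd n1 n2 s ^ 2 * bq ν1 ν2 Om)
      = ((n1:ℝ) * (2/(n1:ℝ))^2 + (n2:ℝ) * (2/(n2:ℝ))^2) * bq ν1 ν2 Om := by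
    rw [Fintype.sum_sum_type]
    simp only [dd, Sum.elim_inl, Sum.elim_inr, neg_sq]
    rw [Finset.sum_const, Finset.sum_const, Finset.card_univ, Finset.card_univ,
      Fintype.card_fin, Fintype.card_fin, nsmul_eq_mul, nsmul_eq_mul]
    ring
  rw [this]
  congr 1
  field_simp
  ring

/-! ### The algebraic decomposition of the statistic -/

lemma sum_offdiag {N : ℕ} (f : Fin N → Fin N → ℝ) :
    (∑ i, ∑ j, if i ≠ j then f i j else 0) = (∑ i, ∑ j, f i j) - ∑ i, f i i := by
  have hrw : ∀ i j, (if i ≠ j then f i j else 0) = f i j - (if i = j then f i j else 0) := by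
    intro i j; by_cases hij : i = j <;> simp [hij]
  simp only [hrw, Finset.sum_sub_distrib]
  congr 1
  refine Finset.sum_congr rfl fun i _ => ?_
  rw [Finset.sum_ite_eq, if_pos (Finset.mem_univ i)]

lemma swap_mk {N : ℕ} (m : Fin p → ℝ) (w : Fin N → Fin p → ℝ) :
    (∑ j, ∑ k, m k * w j k) = ∑ k, m k * (∑ j, w j k) := by
  rw [Finset.sum_comm]
  exact Finset.sum_congr rfl fun k _ => (Finset.mul_sum _ _ _).symm

lemma big2 {N1' N2' : ℕ} (m m' : Fin p → ℝ) (z : Fin N1' → Fin p → ℝ)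
    (w : Fin N2' → Fin p → ℝ) :
    (∑ i, ∑ j, ((fun k => m k + z i k) ⬝ᵥ (fun k => m' k + w j k)))
      = (N1' : ℝ) * (N2' : ℝ) * (∑ k, m k * m' k)
        + (N1' : ℝ) * (∑ k, m k * (∑ j, w j k))
        + (N2' : ℝ) * (∑ k, m' k * (∑ i, z i k))
        + (∑ k, (∑ i, z i k) * (∑ j, w j k)) := by
  have hdot : ∀ i j, ((fun k => m k + z i k) ⬝ᵥ (fun k => m' k + w j k))
      = (∑ k, m k * m' k) + (∑ k, m k * w j k) + ((∑ k, m' k * z i k)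
          + (∑ k, z i k * w j k)) := by
    intro i j
    show (∑ k, (m k + z i k) * (m' k + w j k)) = _
    rw [← Finset.sum_add_distrib, ← Finset.sum_add_distrib, ← Finset.sum_add_distrib]
    exact Finset.sum_congr rfl fun k _ => by ring
  simp only [hdot]
  simp only [Finset.sum_add_distrib, Finset.sum_const, Finset.card_univ, Fintype.card_fin,
    nsmul_eq_mul]
  rw [swap_mk m w]
  have h1 : (∑ i, ∑ j, ∑ k, z i k * w j k) = ∑ k, (∑ i, z i k) * (∑ j, w j k) := by
    have hper : ∀ i, (∑ j, ∑ k, z i k * w j k) = ∑ k, z i k * (∑ j, w j k) := by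
      intro i
      rw [Finset.sum_comm]
      exact Finset.sum_congr rfl fun k _ => (Finset.mul_sum _ _ _).symm
    rw [Finset.sum_congr rfl fun i _ => hper i, Finset.sum_comm]
    exact Finset.sum_congr rfl fun k _ => (Finset.sum_mul _ _ _).symm
  have h2 : (∑ i, ∑ k, m' k * z i k) = ∑ k, m' k * (∑ i, z i k) := swap_mk m' z
  rw [h1]
  have h3 : (∑ x : Fin N1', (N2' : ℝ) * ∑ k, m' k * z x k)
      = (N2' : ℝ) * ∑ k, m' k * (∑ i, z i k) := by
    rw [← Finset.mul_sum, h2]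
  rw [h3]
  ring

lemma big1 {N : ℕ} (m : Fin p → ℝ) (z : Fin N → Fin p → ℝ) :
    (∑ i, ∑ j, if i ≠ j then ((fun k => m k + z i k) ⬝ᵥ (fun k => m k + z j k)) else 0)
      = ((N:ℝ)^2 - (N:ℝ)) * (∑ k, m k * m k)
        + (2*(N:ℝ) - 2) * (∑ k, m k * (∑ i, z i k))
        + ((∑ i, ∑ j, if i ≠ j then (∑ k, z i k * z j k) else 0)) := by
  rw [sum_offdiag, sum_offdiag, big2 m m z z]
  have hdiag : (∑ i, ((fun k => m k + z i k) ⬝ᵥ (fun k => m k + z i k)))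
      = (N:ℝ) * (∑ k, m k * m k) + 2 * (∑ k, m k * (∑ i, z i k))
        + (∑ i, ∑ k, z i k * z i k) := by
    have hper : ∀ i, ((fun k => m k + z i k) ⬝ᵥ (fun k => m k + z i k))
        = (∑ k, m k * m k) + (2 * ∑ k, m k * z i k + (∑ k, z i k * z i k)) := by
      intro i
      show (∑ k, (m k + z i k) * (m k + z i k)) = _
      rw [Finset.mul_sum, ← Finset.sum_add_distrib, ← Finset.sum_add_distrib]
      exact Finset.sum_congr rfl fun k _ => by ring
    simp only [hper]
    rw [Finset.sum_add_distrib, Finset.sum_add_distrib, Finset.sum_const,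
      Finset.card_univ, Fintype.card_fin, nsmul_eq_mul]
    have : (∑ i, 2 * ∑ k, m k * z i k) = 2 * ∑ k, m k * (∑ i, z i k) := by
      rw [← Finset.mul_sum, swap_mk m z]
    rw [this]
    ring
  have hz : (∑ i, ∑ j, ∑ k, z i k * z j k) = ∑ k, (∑ i, z i k) * (∑ j, z j k) := by
    have hper : ∀ i, (∑ j, ∑ k, z i k * z j k) = ∑ k, z i k * (∑ j, z j k) := by
      intro i
      rw [Finset.sum_comm]
      exact Finset.sum_congr rfl fun k _ => (Finset.mul_sum _ _ _).symm
    rw [Finset.sum_congr rfl fun i _ => hper i, Finset.sum_comm]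
    exact Finset.sum_congr rfl fun k _ => (Finset.sum_mul _ _ _).symm
  rw [hdiag, hz]
  ring


lemma sum3_eq {Na Nb : ℕ} (z : Fin Na → Fin p → ℝ) (w : Fin Nb → Fin p → ℝ) :
    (∑ i, ∑ j, ∑ k, z i k * w j k) = ∑ k, (∑ i, z i k) * (∑ j, w j k) := by
  have hper : ∀ i, (∑ j, ∑ k, z i k * w j k) = ∑ k, z i k * (∑ j, w j k) := by
    intro i
    rw [Finset.sum_comm]
    exact Finset.sum_congr rfl fun k _ => (Finset.mul_sum _ _ _).symm
  rw [Finset.sum_congr rfl fun i _ => hper i, Finset.sum_comm]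
  exact Finset.sum_congr rfl fun k _ => (Finset.sum_mul _ _ _).symm

lemma T_decomp (h1 : 2 ≤ n1) (h2 : 2 ≤ n2) (ω : SampleSpace n1 n2 p) :
    Tstat (fun i => (Gmat p).mulVec (ω.1 i)) (fun j => (Gmat p).mulVec (ω.2 j))
      = (∑ k, mud ν1 ν2 k ^ 2) + Ustat ν1 ν2 ω + Lstat ν1 ν2 ω := by
  have h2n1 : (2:ℝ) ≤ (n1:ℝ) := by exact_mod_cast h1
  have h2n2 : (2:ℝ) ≤ (n2:ℝ) := by exact_mod_cast h2
  have ha : (n1:ℝ) ≠ 0 := by linarith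
  have hb : (n1:ℝ) - 1 ≠ 0 := by intro hh; rw [sub_eq_zero] at hh; linarith [hh.symm ▸ h2n1]
  have hc : (n2:ℝ) ≠ 0 := by linarith
  have hd : (n2:ℝ) - 1 ≠ 0 := by intro hh; rw [sub_eq_zero] at hh; linarith [hh.symm ▸ h2n2]
  have hX : (fun i => (Gmat p).mulVec (ω.1 i))
      = fun i => fun k => (Gmat p).mulVec ν1 k + zf ν1 ν2 (Sum.inl i) k ω := by
    funext i k
    simp only [Matrix.mulVec, dotProduct]
    rw [show zf ν1 ν2 (Sum.inl i) k ω = ∑ a, Gmat p k a * (ω.1 i a - ν1 a) from rfl,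
      ← Finset.sum_add_distrib]
    exact Finset.sum_congr rfl fun a _ => by ring
  have hY : (fun j => (Gmat p).mulVec (ω.2 j))
      = fun j => fun k => (Gmat p).mulVec ν2 k + zf ν1 ν2 (Sum.inr j) k ω := by
    funext j k
    simp only [Matrix.mulVec, dotProduct]
    rw [show zf ν1 ν2 (Sum.inr j) k ω = ∑ a, Gmat p k a * (ω.2 j a - ν2 a) from rfl,
      ← Finset.sum_add_distrib]
    exact Finset.sum_congr rfl fun a _ => by ring
  rw [hX, hY]
  simp only [Tstat]
  have hbig1 := big1 (p := p) ((Gmat p).mulVec ν1)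
    (fun i k => zf ν1 ν2 (Sum.inl i) k ω)
  have hbig1' := big1 (p := p) ((Gmat p).mulVec ν2)
    (fun j k => zf ν1 ν2 (Sum.inr j) k ω)
  have hbig2 := big2 (p := p) ((Gmat p).mulVec ν1) ((Gmat p).mulVec ν2)
    (fun i k => zf ν1 ν2 (Sum.inl i) k ω) (fun j k => zf ν1 ν2 (Sum.inr j) k ω)
  rw [hbig1, hbig1', hbig2]
  -- expand Ustat
  have hQQ : (∑ k, (∑ j, zf ν1 ν2 (Sum.inr j) k ω) * (∑ i, zf ν1 ν2 (Sum.inl i) k ω))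
      = ∑ k, (∑ i, zf ν1 ν2 (Sum.inl i) k ω) * (∑ j, zf ν1 ν2 (Sum.inr j) k ω) :=
    Finset.sum_congr rfl fun k _ => mul_comm _ _
  have hU : Ustat ν1 ν2 ω
      = ((n1:ℝ)*((n1:ℝ)-1))⁻¹ * (∑ i, ∑ j, if i ≠ j then
            (∑ k, zf ν1 ν2 (Sum.inl i) k ω * zf ν1 ν2 (Sum.inl j) k ω) else 0)
        + ((n2:ℝ)*((n2:ℝ)-1))⁻¹ * (∑ i, ∑ j, if i ≠ j then
            (∑ k, zf ν1 ν2 (Sum.inr i) k ω * zf ν1 ν2 (Sum.inr j) k ω) else 0)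
        - 2 * ((n1:ℝ)*(n2:ℝ))⁻¹ * (∑ k, (∑ i, zf ν1 ν2 (Sum.inl i) k ω)
            * (∑ j, zf ν1 ν2 (Sum.inr j) k ω)) := by
    rw [show Ustat ν1 ν2 ω = ∑ s, ∑ t, cc n1 n2 s t * zeta ν1 ν2 s t ω from rfl,
      Fintype.sum_sum_type]
    simp only [Fintype.sum_sum_type]
    rw [Finset.sum_add_distrib, Finset.sum_add_distrib]
    have q11 : (∑ i, ∑ j, cc n1 n2 (Sum.inl i) (Sum.inl j)
        * zeta ν1 ν2 (Sum.inl i) (Sum.inl j) ω)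
        = ((n1:ℝ)*((n1:ℝ)-1))⁻¹ * (∑ i, ∑ j, if i ≠ j then
            (∑ k, zf ν1 ν2 (Sum.inl i) k ω * zf ν1 ν2 (Sum.inl j) k ω) else 0) := by
      rw [Finset.mul_sum]
      refine Finset.sum_congr rfl fun i _ => ?_
      rw [Finset.mul_sum]
      refine Finset.sum_congr rfl fun j _ => ?_
      rw [cc_ll]
      by_cases hij : i = j
      · simp [hij]
      · rw [if_neg hij, if_pos hij]
        rfl
    have q22 : (∑ i, ∑ j, cc n1 n2 (Sum.inr i) (Sum.inr j)
        * zeta ν1 ν2 (Sum.inr i) (Sum.inr j) ω)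
        = ((n2:ℝ)*((n2:ℝ)-1))⁻¹ * (∑ i, ∑ j, if i ≠ j then
            (∑ k, zf ν1 ν2 (Sum.inr i) k ω * zf ν1 ν2 (Sum.inr j) k ω) else 0) := by
      rw [Finset.mul_sum]
      refine Finset.sum_congr rfl fun i _ => ?_
      rw [Finset.mul_sum]
      refine Finset.sum_congr rfl fun j _ => ?_
      rw [cc_rr]
      by_cases hij : i = j
      · simp [hij]
      · rw [if_neg hij, if_pos hij]
        rfl
    have q12 : (∑ i, ∑ j, cc n1 n2 (Sum.inl i) (Sum.inr j)
        * zeta ν1 ν2 (Sum.inl i) (Sum.inr j) ω)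
        = -(((n1:ℝ)*(n2:ℝ))⁻¹) * (∑ k, (∑ i, zf ν1 ν2 (Sum.inl i) k ω)
            * (∑ j, zf ν1 ν2 (Sum.inr j) k ω)) := by
      rw [← sum3_eq (fun i k => zf ν1 ν2 (Sum.inl i) k ω)
        (fun j k => zf ν1 ν2 (Sum.inr j) k ω), Finset.mul_sum]
      refine Finset.sum_congr rfl fun i _ => ?_
      rw [Finset.mul_sum]
      exact Finset.sum_congr rfl fun j _ => by rw [cc_lr]; rfl
    have q21 : (∑ i, ∑ j, cc n1 n2 (Sum.inr i) (Sum.inl j)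
        * zeta ν1 ν2 (Sum.inr i) (Sum.inl j) ω)
        = -(((n1:ℝ)*(n2:ℝ))⁻¹) * (∑ k, (∑ i, zf ν1 ν2 (Sum.inl i) k ω)
            * (∑ j, zf ν1 ν2 (Sum.inr j) k ω)) := by
      rw [← hQQ, ← sum3_eq (fun j k => zf ν1 ν2 (Sum.inr j) k ω)
        (fun i k => zf ν1 ν2 (Sum.inl i) k ω), Finset.mul_sum]
      refine Finset.sum_congr rfl fun i _ => ?_
      rw [Finset.mul_sum]
      exact Finset.sum_congr rfl fun j _ => by rw [cc_rl]; rfl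
    rw [q11, q22, q12, q21]
    ring
  -- expand Lstat
  have hmud : ∀ k, mud ν1 ν2 k = (Gmat p).mulVec ν1 k - (Gmat p).mulVec ν2 k := by
    intro k
    simp only [mud, Matrix.mulVec, dotProduct]
    rw [← Finset.sum_sub_distrib]
    exact Finset.sum_congr rfl fun a _ => by ring
  have hL : Lstat ν1 ν2 ω
      = 2/(n1:ℝ) * ((∑ k, (Gmat p).mulVec ν1 k * (∑ i, zf ν1 ν2 (Sum.inl i) k ω))
          - (∑ k, (Gmat p).mulVec ν2 k * (∑ i, zf ν1 ν2 (Sum.inl i) k ω)))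
        - 2/(n2:ℝ) * ((∑ k, (Gmat p).mulVec ν1 k * (∑ j, zf ν1 ν2 (Sum.inr j) k ω))
          - (∑ k, (Gmat p).mulVec ν2 k * (∑ j, zf ν1 ν2 (Sum.inr j) k ω))) := by
    rw [show Lstat ν1 ν2 ω = ∑ s, dd n1 n2 s * eta ν1 ν2 s ω from rfl,
      Fintype.sum_sum_type]
    simp only [dd, Sum.elim_inl, Sum.elim_inr]
    rw [← Finset.mul_sum]
    have hneg : (∑ j : Fin n2, -(2 / (n2:ℝ)) * eta ν1 ν2 (Sum.inr j) ω)
        = -(2/(n2:ℝ)) * (∑ j, eta ν1 ν2 (Sum.inr j) ω) := by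
      rw [← Finset.mul_sum]
    rw [hneg]
    have hx : (∑ i, eta ν1 ν2 (Sum.inl i) ω)
        = (∑ k, (Gmat p).mulVec ν1 k * (∑ i, zf ν1 ν2 (Sum.inl i) k ω))
          - (∑ k, (Gmat p).mulVec ν2 k * (∑ i, zf ν1 ν2 (Sum.inl i) k ω)) := by
      rw [show (∑ i, eta ν1 ν2 (Sum.inl i) ω)
          = ∑ i, ∑ k, mud ν1 ν2 k * zf ν1 ν2 (Sum.inl i) k ω from rfl,
        swap_mk (mud ν1 ν2) (fun i k => zf ν1 ν2 (Sum.inl i) k ω),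
        ← Finset.sum_sub_distrib]
      exact Finset.sum_congr rfl fun k _ => by rw [hmud k]; ring
    have hy : (∑ j, eta ν1 ν2 (Sum.inr j) ω)
        = (∑ k, (Gmat p).mulVec ν1 k * (∑ j, zf ν1 ν2 (Sum.inr j) k ω))
          - (∑ k, (Gmat p).mulVec ν2 k * (∑ j, zf ν1 ν2 (Sum.inr j) k ω)) := by
      rw [show (∑ j, eta ν1 ν2 (Sum.inr j) ω)
          = ∑ j, ∑ k, mud ν1 ν2 k * zf ν1 ν2 (Sum.inr j) k ω from rfl,
        swap_mk (mud ν1 ν2) (fun j k => zf ν1 ν2 (Sum.inr j) k ω),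
        ← Finset.sum_sub_distrib]
      exact Finset.sum_congr rfl fun k _ => by rw [hmud k]; ring
    rw [hx, hy]
    ring
  have hmudsq : (∑ k, mud ν1 ν2 k ^ 2)
      = (∑ k, (Gmat p).mulVec ν1 k * (Gmat p).mulVec ν1 k)
        - 2 * (∑ k, (Gmat p).mulVec ν1 k * (Gmat p).mulVec ν2 k)
        + (∑ k, (Gmat p).mulVec ν2 k * (Gmat p).mulVec ν2 k) := by
    have hper : ∀ k, mud ν1 ν2 k ^ 2
        = (Gmat p).mulVec ν1 k * (Gmat p).mulVec ν1 k
          - 2 * ((Gmat p).mulVec ν1 k * (Gmat p).mulVec ν2 k)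
          + (Gmat p).mulVec ν2 k * (Gmat p).mulVec ν2 k := by
      intro k; rw [hmud k]; ring
    simp only [hper]
    rw [Finset.sum_add_distrib, Finset.sum_sub_distrib, ← Finset.mul_sum]
  rw [hU, hL, hmudsq]
  field_simp
  ring


/-! ### Measurability of the statistic and the Chebyshev bound -/

lemma meas_T : Measurable (fun ω : SampleSpace n1 n2 p =>
    Tstat (fun i => (Gmat p).mulVec (ω.1 i)) (fun j => (Gmat p).mulVec (ω.2 j))) := by
  have mX : ∀ (i : Fin n1) (k : Fin p),
      Measurable (fun ω : SampleSpace n1 n2 p => (Gmat p).mulVec (ω.1 i) k) := by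
    intro i k
    simp only [Matrix.mulVec, dotProduct]
    refine Finset.measurable_sum _ fun a _ => ?_
    have hma : Measurable fun ω : SampleSpace n1 n2 p => ω.1 i a :=
      (measurable_pi_apply a).comp ((measurable_pi_apply i).comp measurable_fst)
    exact hma.const_mul _
  have mY : ∀ (j : Fin n2) (k : Fin p),
      Measurable (fun ω : SampleSpace n1 n2 p => (Gmat p).mulVec (ω.2 j) k) := by
    intro j k
    simp only [Matrix.mulVec, dotProduct]
    refine Finset.measurable_sum _ fun a _ => ?_
    have hma : Measurable fun ω : SampleSpace n1 n2 p => ω.2 j a :=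
      (measurable_pi_apply a).comp ((measurable_pi_apply j).comp measurable_snd)
    exact hma.const_mul _
  simp only [Tstat, dotProduct]
  apply Measurable.sub
  · apply Measurable.add
    · apply Measurable.div_const
      refine Finset.measurable_sum _ fun i _ => Finset.measurable_sum _ fun j _ => ?_
      by_cases hij : i = j
      · simp [hij]
      · simp only [if_pos hij, ne_eq, hij, not_false_eq_true, if_true]
        exact Finset.measurable_sum _ fun k _ => (mX i k).mul (mX j k)
    · apply Measurable.div_const
      refine Finset.measurable_sum _ fun i _ => Finset.measurable_sum _ fun j _ => ?_
      by_cases hij : i = j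
      · simp [hij]
      · simp only [ne_eq, hij, not_false_eq_true, if_true]
        exact Finset.measurable_sum _ fun k _ => (mY i k).mul (mY j k)
  · apply Measurable.div_const
    apply Measurable.const_mul
    refine Finset.measurable_sum _ fun i _ => Finset.measurable_sum _ fun j _ => ?_
    exact Finset.measurable_sum _ fun k _ => (mX i k).mul (mY j k)

lemma key_bound (h : Hyp P ν1 ν2 Om) (h1 : 2 ≤ n1) (h2 : 2 ≤ n2) (zα : ℝ)
    (htr : 0 < trq Om) (haq : 0 < (∑ k, mud ν1 ν2 k ^ 2))
    (hza : zα * Real.sqrt (sigma2 n1 n2 (Gmat p * Om * (Gmat p)ᵀ))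
      ≤ (∑ k, mud ν1 ν2 k ^ 2) / 2) :
    ((P {ω | Qstat (Gmat p * Om * (Gmat p)ᵀ) (fun i => (Gmat p).mulVec (ω.1 i))
        (fun j => (Gmat p).mulVec (ω.2 j)) ≤ zα}).toReal)
      ≤ 8 * (sigma2 n1 n2 (Gmat p * Om * (Gmat p)ᵀ)
          + 4 * (((n1:ℝ) + (n2:ℝ)) / ((n1:ℝ) * (n2:ℝ))) * bq ν1 ν2 Om)
        / (∑ k, mud ν1 ν2 k ^ 2) ^ 2 := by
  have hprob := h.prob
  have hn1pos : 0 < n1 := lt_of_lt_of_le Nat.zero_lt_two h1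
  have h2n1 : (2:ℝ) ≤ (n1:ℝ) := by exact_mod_cast h1
  have h2n2 : (2:ℝ) ≤ (n2:ℝ) := by exact_mod_cast h2
  have hσpos : 0 < sigma2 n1 n2 (Gmat p * Om * (Gmat p)ᵀ) := by
    rw [sigma2, trace_eq_trq h hn1pos]
    have hN1 : 0 < (n1:ℝ) * ((n1:ℝ) - 1) := by nlinarith
    have hN2 : 0 < (n2:ℝ) * ((n2:ℝ) - 1) := by nlinarith
    have hN3 : 0 < (n1:ℝ) * (n2:ℝ) := by nlinarith
    have t1 : 0 < 2 * trq Om / ((n1:ℝ) * ((n1:ℝ) - 1)) := div_pos (by linarith) hN1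
    have t2 : 0 < 2 * trq Om / ((n2:ℝ) * ((n2:ℝ) - 1)) := div_pos (by linarith) hN2
    have t3 : 0 < 4 * trq Om / ((n1:ℝ) * (n2:ℝ)) := div_pos (by linarith) hN3
    linarith
  have hsqrt : 0 < Real.sqrt (sigma2 n1 n2 (Gmat p * Om * (Gmat p)ᵀ)) :=
    Real.sqrt_pos.2 hσpos
  set g : SampleSpace n1 n2 p → ℝ :=
    fun ω => 2 * Ustat ν1 ν2 ω ^ 2 + 2 * Lstat ν1 ν2 ω ^ 2 with hgdef
  have hg_int : Integrable g P := ((int_U_sq h).const_mul 2).add ((int_L_sq h).const_mul 2)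
  have hg_nonneg : 0 ≤ᵐ[P] g := ae_of_all _ fun ω => by
    simp only [hgdef]
    positivity
  have hsub : {ω | Qstat (Gmat p * Om * (Gmat p)ᵀ) (fun i => (Gmat p).mulVec (ω.1 i))
      (fun j => (Gmat p).mulVec (ω.2 j)) ≤ zα}
      ⊆ {ω | (∑ k, mud ν1 ν2 k ^ 2) ^ 2 / 4 ≤ g ω} := by
    intro ω hω
    simp only [Set.mem_setOf_eq] at hω ⊢
    have hQT : Qstat (Gmat p * Om * (Gmat p)ᵀ) (fun i => (Gmat p).mulVec (ω.1 i))
        (fun j => (Gmat p).mulVec (ω.2 j))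
        = Tstat (fun i => (Gmat p).mulVec (ω.1 i)) (fun j => (Gmat p).mulVec (ω.2 j))
          / Real.sqrt (sigma2 n1 n2 (Gmat p * Om * (Gmat p)ᵀ)) := rfl
    rw [hQT] at hω
    have hT := (div_le_iff₀ hsqrt).1 hω
    rw [T_decomp h1 h2 ω] at hT
    have hUL : Ustat ν1 ν2 ω + Lstat ν1 ν2 ω ≤ -((∑ k, mud ν1 ν2 k ^ 2) / 2) := by
      linarith
    have h41 : (0:ℝ) ≤ -(Ustat ν1 ν2 ω + Lstat ν1 ν2 ω) - (∑ k, mud ν1 ν2 k ^ 2) / 2 := by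
      linarith
    have h42 : (0:ℝ) ≤ (∑ k, mud ν1 ν2 k ^ 2) / 2 - (Ustat ν1 ν2 ω + Lstat ν1 ν2 ω) := by
      linarith
    have h4 : (∑ k, mud ν1 ν2 k ^ 2) ^ 2 / 4 ≤ (Ustat ν1 ν2 ω + Lstat ν1 ν2 ω) ^ 2 := by
      nlinarith [mul_nonneg h41 h42]
    simp only [hgdef]
    nlinarith [sq_nonneg (Ustat ν1 ν2 ω - Lstat ν1 ν2 ω)]
  have hmarkov := mul_meas_ge_le_integral_of_nonneg hg_nonneg hg_int
    ((∑ k, mud ν1 ν2 k ^ 2) ^ 2 / 4)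
  have hεpos : 0 < (∑ k, mud ν1 ν2 k ^ 2) ^ 2 / 4 := by positivity
  have hgval : (∫ ω, g ω ∂P)
      = 2 * sigma2 n1 n2 (Gmat p * Om * (Gmat p)ᵀ)
        + 2 * (4 * (((n1:ℝ) + (n2:ℝ)) / ((n1:ℝ) * (n2:ℝ))) * bq ν1 ν2 Om) := by
    simp only [hgdef]
    rw [integral_add ((int_U_sq h).const_mul 2) ((int_L_sq h).const_mul 2),
      integral_const_mul, integral_const_mul, EU2 h h1 h2, EL2 h h1 h2]
  calc (P {ω | Qstat (Gmat p * Om * (Gmat p)ᵀ) (fun i => (Gmat p).mulVec (ω.1 i))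
        (fun j => (Gmat p).mulVec (ω.2 j)) ≤ zα}).toReal
      ≤ (P {ω | (∑ k, mud ν1 ν2 k ^ 2) ^ 2 / 4 ≤ g ω}).toReal :=
        ENNReal.toReal_mono (measure_ne_top _ _) (measure_mono hsub)
    _ ≤ (∫ ω, g ω ∂P) / ((∑ k, mud ν1 ν2 k ^ 2) ^ 2 / 4) := by
        rw [le_div_iff₀ hεpos, mul_comm]
        exact hmarkov
    _ = 8 * (sigma2 n1 n2 (Gmat p * Om * (Gmat p)ᵀ)
          + 4 * (((n1:ℝ) + (n2:ℝ)) / ((n1:ℝ) * (n2:ℝ))) * bq ν1 ν2 Om)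
        / (∑ k, mud ν1 ν2 k ^ 2) ^ 2 := by
        rw [hgval]
        have haqne : (∑ k, mud ν1 ν2 k ^ 2) ≠ 0 := ne_of_gt haq
        field_simp
        ring


/-! ### Positivity of the trace under A2 -/

lemma Om_symm (h : Hyp P ν1 ν2 Om) (hn : 0 < n1) (a b : Fin p) : Om a b = Om b a := by
  set s0 : Fin n1 ⊕ Fin n2 := Sum.inl ⟨0, hn⟩
  rw [← h.cov s0 a b, ← h.cov s0 b a]
  have : (fun ω => (gfam n1 n2 p s0 ω a - nuf ν1 ν2 s0 a)
      * (gfam n1 n2 p s0 ω b - nuf ν1 ν2 s0 b))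
      = fun ω => (gfam n1 n2 p s0 ω b - nuf ν1 ν2 s0 b)
        * (gfam n1 n2 p s0 ω a - nuf ν1 ν2 s0 a) := by
    funext ω; ring
  rw [this]

lemma cov_sq_le (h : Hyp P ν1 ν2 Om) (hn : 0 < n1) (a b : Fin p) (hbb : 0 < Om b b) :
    Om a b ^ 2 ≤ Om a a * Om b b := by
  set s0 : Fin n1 ⊕ Fin n2 := Sum.inl (⟨0, hn⟩ : Fin n1)
  set lam : ℝ := Om a b / Om b b with hlam
  have hre : (fun ω => ((gfam n1 n2 p s0 ω a - nuf ν1 ν2 s0 a)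
      - lam * (gfam n1 n2 p s0 ω b - nuf ν1 ν2 s0 b)) ^ 2)
      = fun ω => (gfam n1 n2 p s0 ω a - nuf ν1 ν2 s0 a)
          * (gfam n1 n2 p s0 ω a - nuf ν1 ν2 s0 a)
        - (2 * lam) * ((gfam n1 n2 p s0 ω a - nuf ν1 ν2 s0 a)
          * (gfam n1 n2 p s0 ω b - nuf ν1 ν2 s0 b))
        + (lam * lam) * ((gfam n1 n2 p s0 ω b - nuf ν1 ν2 s0 b)
          * (gfam n1 n2 p s0 ω b - nuf ν1 ν2 s0 b)) := by
    funext ω; ring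
  have hint : Integrable (fun ω => ((gfam n1 n2 p s0 ω a - nuf ν1 ν2 s0 a)
      - lam * (gfam n1 n2 p s0 ω b - nuf ν1 ν2 s0 b)) ^ 2) P := by
    rw [hre]
    exact ((int_cent2 h s0 a a).sub ((int_cent2 h s0 a b).const_mul _)).add
      ((int_cent2 h s0 b b).const_mul _)
  have hval : (∫ ω, ((gfam n1 n2 p s0 ω a - nuf ν1 ν2 s0 a)
      - lam * (gfam n1 n2 p s0 ω b - nuf ν1 ν2 s0 b)) ^ 2 ∂P)
      = Om a a - 2 * lam * Om a b + lam * lam * Om b b := by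
    rw [hre]
    have e1 : (∫ ω, ((gfam n1 n2 p s0 ω a - nuf ν1 ν2 s0 a)
          * (gfam n1 n2 p s0 ω a - nuf ν1 ν2 s0 a)
        - (2 * lam) * ((gfam n1 n2 p s0 ω a - nuf ν1 ν2 s0 a)
          * (gfam n1 n2 p s0 ω b - nuf ν1 ν2 s0 b))
        + (lam * lam) * ((gfam n1 n2 p s0 ω b - nuf ν1 ν2 s0 b)
          * (gfam n1 n2 p s0 ω b - nuf ν1 ν2 s0 b))) ∂P)
        = (∫ ω, ((gfam n1 n2 p s0 ω a - nuf ν1 ν2 s0 a)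
            * (gfam n1 n2 p s0 ω a - nuf ν1 ν2 s0 a)
          - (2 * lam) * ((gfam n1 n2 p s0 ω a - nuf ν1 ν2 s0 a)
            * (gfam n1 n2 p s0 ω b - nuf ν1 ν2 s0 b))) ∂P)
          + (∫ ω, (lam * lam) * ((gfam n1 n2 p s0 ω b - nuf ν1 ν2 s0 b)
            * (gfam n1 n2 p s0 ω b - nuf ν1 ν2 s0 b)) ∂P) :=
      integral_add ((int_cent2 h s0 a a).sub ((int_cent2 h s0 a b).const_mul _))
        ((int_cent2 h s0 b b).const_mul _)
    have e2 : (∫ ω, ((gfam n1 n2 p s0 ω a - nuf ν1 ν2 s0 a)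
          * (gfam n1 n2 p s0 ω a - nuf ν1 ν2 s0 a)
        - (2 * lam) * ((gfam n1 n2 p s0 ω a - nuf ν1 ν2 s0 a)
          * (gfam n1 n2 p s0 ω b - nuf ν1 ν2 s0 b))) ∂P)
        = (∫ ω, ((gfam n1 n2 p s0 ω a - nuf ν1 ν2 s0 a)
            * (gfam n1 n2 p s0 ω a - nuf ν1 ν2 s0 a)) ∂P)
          - (∫ ω, (2 * lam) * ((gfam n1 n2 p s0 ω a - nuf ν1 ν2 s0 a)
            * (gfam n1 n2 p s0 ω b - nuf ν1 ν2 s0 b)) ∂P) :=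
      integral_sub (int_cent2 h s0 a a) ((int_cent2 h s0 a b).const_mul _)
    rw [e1, e2, integral_const_mul, integral_const_mul, h.cov, h.cov, h.cov]
  have hpos : 0 ≤ Om a a - 2 * lam * Om a b + lam * lam * Om b b := by
    rw [← hval]
    exact integral_nonneg fun ω => sq_nonneg _
  have heq : Om a a - 2 * lam * Om a b + lam * lam * Om b b
      = Om a a - Om a b ^ 2 / Om b b := by
    rw [hlam]
    field_simp
    ring
  rw [heq] at hpos
  have := (div_le_iff₀ hbb).1 (by linarith : Om a b ^ 2 / Om b b ≤ Om a a)
  linarith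

lemma rayleigh_bdd {C : ℝ} (hCpos : 0 < C) (habs : ∀ a b, |Om a b| ≤ C) :
    ∀ r ∈ {r : ℝ | ∃ x : Fin p → ℝ, (∑ j, x j ^ 2) = 1 ∧ r = x ⬝ᵥ Om.mulVec x},
      r ≤ C * p := by
  rintro r ⟨x, hx1, rfl⟩
  have h1 : x ⬝ᵥ Om.mulVec x = ∑ a, ∑ b, x a * (Om a b * x b) := by
    simp [dotProduct, Matrix.mulVec, Finset.mul_sum]
  rw [h1]
  calc (∑ a, ∑ b, x a * (Om a b * x b)) ≤ ∑ a, ∑ b, |x a| * (C * |x b|) := by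
        refine Finset.sum_le_sum fun a _ => Finset.sum_le_sum fun b _ => ?_
        calc x a * (Om a b * x b) ≤ |x a * (Om a b * x b)| := le_abs_self _
          _ = |x a| * (|Om a b| * |x b|) := by rw [abs_mul, abs_mul]
          _ ≤ |x a| * (C * |x b|) := by
              refine mul_le_mul_of_nonneg_left ?_ (abs_nonneg _)
              exact mul_le_mul_of_nonneg_right (habs a b) (abs_nonneg _)
    _ = C * (∑ a, |x a|) ^ 2 := by
        rw [sq, Finset.sum_mul_sum, Finset.mul_sum]
        refine Finset.sum_congr rfl fun a _ => ?_
        rw [Finset.mul_sum]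
        exact Finset.sum_congr rfl fun b _ => by ring
    _ ≤ C * ((p : ℝ) * ∑ j, |x j| ^ 2) := by
        refine mul_le_mul_of_nonneg_left ?_ hCpos.le
        have hcs := sq_sum_le_card_mul_sum_sq (s := (Finset.univ : Finset (Fin p)))
          (f := fun j => |x j|)
        simpa [Finset.card_univ] using hcs
    _ = C * p := by
        simp only [sq_abs]
        rw [hx1, mul_one]

lemma maxEig_bddAbove {C : ℝ} (hCpos : 0 < C) (habs : ∀ a b, |Om a b| ≤ C) :
    BddAbove {r : ℝ | ∃ x : Fin p → ℝ, (∑ j, x j ^ 2) = 1 ∧ r = x ⬝ᵥ Om.mulVec x} :=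
  ⟨C * p, fun r hr => rayleigh_bdd hCpos habs r hr⟩

lemma maxEig_ge_diag (hp : 0 < p) {C : ℝ} (hCpos : 0 < C) (habs : ∀ a b, |Om a b| ≤ C)
    (j0 : Fin p) : Om j0 j0 ≤ maxEig Om := by
  set x : Fin p → ℝ := fun a => if a = j0 then 1 else 0 with hxdef
  have hx1 : (∑ a, x a ^ 2) = 1 := by
    have hper : ∀ a, x a ^ 2 = if a = j0 then 1 else 0 := by
      intro a; by_cases ha : a = j0 <;> simp [hxdef, ha]
    simp only [hper]
    rw [Finset.sum_ite_eq', if_pos (Finset.mem_univ j0)]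
  have hmv : ∀ a, Om.mulVec x a = Om a j0 := by
    intro a
    simp only [Matrix.mulVec, dotProduct, hxdef]
    have hper : ∀ b, Om a b * (if b = j0 then (1:ℝ) else 0)
        = if b = j0 then Om a b else 0 := by
      intro b; by_cases hb : b = j0 <;> simp [hb]
    simp only [hper]
    rw [Finset.sum_ite_eq', if_pos (Finset.mem_univ j0)]
  have hval : x ⬝ᵥ Om.mulVec x = Om j0 j0 := by
    simp only [dotProduct, hmv]
    simp [hxdef]
  exact le_csSup (maxEig_bddAbove hCpos habs) ⟨x, hx1, hval.symm⟩

lemma S0_le_maxEig (hp : 0 < p) {C : ℝ} (hCpos : 0 < C) (habs : ∀ a b, |Om a b| ≤ C) :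
    (∑ a, ∑ b, Om a b) / p ≤ maxEig Om := by
  have hppos : (0:ℝ) < p := by exact_mod_cast hp
  set x : Fin p → ℝ := fun _ => (Real.sqrt p)⁻¹ with hxdef
  have hsq : Real.sqrt p * Real.sqrt p = p := Real.mul_self_sqrt hppos.le
  have hx1 : (∑ a, x a ^ 2) = 1 := by
    simp only [hxdef]
    rw [Finset.sum_const, Finset.card_univ, Fintype.card_fin, nsmul_eq_mul]
    rw [sq, ← mul_inv, hsq]
    exact mul_inv_cancel₀ (ne_of_gt hppos)
  have hval : x ⬝ᵥ Om.mulVec x = (∑ a, ∑ b, Om a b) / p := by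
    simp only [dotProduct, Matrix.mulVec, hxdef]
    have hper : ∀ a, (Real.sqrt p)⁻¹ * (∑ b, Om a b * (Real.sqrt p)⁻¹)
        = ((Real.sqrt p)⁻¹ * (Real.sqrt p)⁻¹) * ∑ b, Om a b := by
      intro a
      rw [← Finset.sum_mul]
      ring
    simp only [hper]
    rw [← Finset.mul_sum, ← mul_inv, hsq, div_eq_inv_mul]
  exact le_csSup (maxEig_bddAbove hCpos habs) ⟨x, hx1, hval.symm⟩

lemma trOmOm_le {C : ℝ} (hCpos : 0 < C) (habs : ∀ a b, |Om a b| ≤ C) :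
    (Om * Om).trace ≤ C ^ 2 * p ^ 2 := by
  rw [Matrix.trace]
  simp only [Matrix.diag, Matrix.mul_apply]
  calc (∑ k, ∑ l, Om k l * Om l k) ≤ ∑ k : Fin p, ∑ l : Fin p, C * C := by
        refine Finset.sum_le_sum fun k _ => Finset.sum_le_sum fun l _ => ?_
        calc Om k l * Om l k ≤ |Om k l * Om l k| := le_abs_self _
          _ = |Om k l| * |Om l k| := abs_mul _ _
          _ ≤ C * C := mul_le_mul (habs k l) (habs l k) (abs_nonneg _) hCpos.le
    _ = C ^ 2 * p ^ 2 := by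
        rw [Finset.sum_const, Finset.sum_const, Finset.card_univ, Fintype.card_fin,
          nsmul_eq_mul, nsmul_eq_mul]
        ring

lemma trOmOm_ge (h : Hyp P ν1 ν2 Om) (hn : 0 < n1) (hp : 0 < p) {C : ℝ} (hCpos : 0 < C)
    (hd : 1 / C ≤ Om ⟨0, hp⟩ ⟨0, hp⟩) : 1 / C ^ 2 ≤ (Om * Om).trace := by
  set j0 : Fin p := ⟨0, hp⟩
  rw [Matrix.trace]
  simp only [Matrix.diag, Matrix.mul_apply]
  have hsym := Om_symm h hn
  have hterm : ∀ k l : Fin p, 0 ≤ Om k l * Om l k := by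
    intro k l; rw [hsym l k]; exact mul_self_nonneg _
  have h1 : Om j0 j0 * Om j0 j0 ≤ ∑ l, Om j0 l * Om l j0 :=
    Finset.single_le_sum (fun l _ => hterm j0 l) (Finset.mem_univ j0)
  have h2 : (∑ l, Om j0 l * Om l j0) ≤ ∑ k, ∑ l, Om k l * Om l k :=
    Finset.single_le_sum (fun k _ => Finset.sum_nonneg fun l _ => hterm k l)
      (Finset.mem_univ j0)
  have h3 : 1 / C ^ 2 ≤ Om j0 j0 * Om j0 j0 := by
    have hpos : 0 < 1 / C := by positivity
    have := mul_le_mul hd hd hpos.le (le_trans hpos.le hd)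
    calc 1 / C ^ 2 = 1 / C * (1 / C) := by rw [sq]; ring
      _ ≤ Om j0 j0 * Om j0 j0 := this
  linarith

lemma Gmat_apply (p : ℕ) (a b : Fin p) :
    Gmat p a b = (if a = b then 1 else 0) - (p : ℝ)⁻¹ := by
  simp [Gmat, Matrix.sub_apply, Matrix.one_apply, Matrix.smul_apply, Matrix.of_apply,
    smul_eq_mul, mul_one]

lemma GG_apply (hp : 0 < p) (a b : Fin p) :
    (∑ k, Gmat p k a * Gmat p k b) = Gmat p a b := by
  have hppos : (0:ℝ) < p := by exact_mod_cast hp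
  have hpne : (p:ℝ) ≠ 0 := ne_of_gt hppos
  simp only [Gmat_apply]
  have hexp : ∀ k : Fin p,
      ((if k = a then (1:ℝ) else 0) - (p:ℝ)⁻¹) * ((if k = b then (1:ℝ) else 0) - (p:ℝ)⁻¹)
      = (if k = a then (if a = b then (1:ℝ) else 0) else 0)
        - (p:ℝ)⁻¹ * (if k = a then (1:ℝ) else 0)
        - (p:ℝ)⁻¹ * (if k = b then (1:ℝ) else 0) + (p:ℝ)⁻¹ * (p:ℝ)⁻¹ := by
    intro k
    by_cases h1 : k = a <;> by_cases h2 : k = b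
    · have hab : a = b := h1.symm.trans h2
      simp [h1, hab]
      try ring
    · have hab : ¬ a = b := fun hh => h2 (h1.trans hh)
      simp [h1, h2, hab]
      try ring
    · have hab : ¬ a = b := fun hh => h1 (h2.trans hh.symm)
      have hba : ¬ b = a := fun hh => hab hh.symm
      simp [h1, h2, hab, hba]
      try ring
    · simp [h1, h2]
      try ring
  simp only [hexp]
  rw [Finset.sum_add_distrib, Finset.sum_sub_distrib, Finset.sum_sub_distrib]
  rw [Finset.sum_ite_eq', if_pos (Finset.mem_univ a)]
  rw [← Finset.mul_sum, ← Finset.mul_sum]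
  rw [Finset.sum_ite_eq', if_pos (Finset.mem_univ a)]
  rw [Finset.sum_ite_eq', if_pos (Finset.mem_univ b)]
  rw [Finset.sum_const, Finset.card_univ, Fintype.card_fin, nsmul_eq_mul]
  rw [show (p:ℝ) * ((p:ℝ)⁻¹ * (p:ℝ)⁻¹) = (p:ℝ)⁻¹ from by field_simp]
  ring

lemma trSig_eq (hp : 0 < p) (Om : Matrix (Fin p) (Fin p) ℝ) :
    (∑ k, (Gmat p * Om * (Gmat p)ᵀ) k k)
      = (∑ a, Om a a) - (p:ℝ)⁻¹ * (∑ b, ∑ a, Om a b) := by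
  have h1 : ∀ k, (Gmat p * Om * (Gmat p)ᵀ) k k
      = ∑ b, ∑ a, Gmat p k a * Om a b * Gmat p k b := by
    intro k
    simp only [Matrix.mul_apply, Matrix.transpose_apply, Finset.sum_mul]
  simp only [h1]
  rw [Finset.sum_comm]
  have h2 : ∀ b, (∑ k, ∑ a, Gmat p k a * Om a b * Gmat p k b)
      = ∑ a, Om a b * Gmat p a b := by
    intro b
    rw [Finset.sum_comm]
    refine Finset.sum_congr rfl fun a _ => ?_
    rw [← GG_apply hp a b, Finset.mul_sum]
    exact Finset.sum_congr rfl fun k _ => by ring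
  simp only [h2]
  have h3 : ∀ b, (∑ a, Om a b * Gmat p a b)
      = Om b b - (p:ℝ)⁻¹ * (∑ a, Om a b) := by
    intro b
    have hper : ∀ a, Om a b * Gmat p a b
        = (if a = b then Om a b else 0) - (p:ℝ)⁻¹ * Om a b := by
      intro a
      rw [Gmat_apply]
      by_cases hab : a = b <;> simp [hab] <;> ring
    simp only [hper]
    rw [Finset.sum_sub_distrib, Finset.sum_ite_eq', if_pos (Finset.mem_univ b),
      ← Finset.mul_sum]
  simp only [h3]
  rw [Finset.sum_sub_distrib, ← Finset.mul_sum]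

lemma trq_pos_main (h : Hyp P ν1 ν2 Om) (hn : 0 < n1) (hp : 0 < p)
    {C : ℝ} (hCpos : 0 < C) (hdiag : ∀ j, 1 / C ≤ Om j j ∧ Om j j ≤ C)
    (habs : ∀ a b, |Om a b| ≤ C)
    (hml : maxEig Om ≤ (p : ℝ) / (2 * C)) : 0 < trq Om := by
  have hppos : (0:ℝ) < p := by exact_mod_cast hp
  have htrOm : (p:ℝ) * (1 / C) ≤ ∑ a, Om a a := by
    calc (p:ℝ) * (1 / C) = ∑ _a : Fin p, 1 / C := by
          rw [Finset.sum_const, Finset.card_univ, Fintype.card_fin, nsmul_eq_mul]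
      _ ≤ ∑ a, Om a a := Finset.sum_le_sum fun a _ => (hdiag a).1
  have hS0 : (∑ a, ∑ b, Om a b) / p ≤ maxEig Om := S0_le_maxEig hp hCpos habs
  have htrSig : 0 < ∑ k, (Gmat p * Om * (Gmat p)ᵀ) k k := by
    rw [trSig_eq hp Om]
    have hswap : (∑ b, ∑ a, Om a b) = ∑ a, ∑ b, Om a b := Finset.sum_comm
    rw [hswap]
    have hS0' : (p:ℝ)⁻¹ * (∑ a, ∑ b, Om a b) ≤ maxEig Om := by
      rw [← div_eq_inv_mul]
      exact hS0
    have hgap : (p:ℝ) / (2 * C) < (p:ℝ) * (1 / C) := by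
      rw [div_lt_iff₀ (by positivity)]
      have : (p:ℝ) * (1 / C) * (2 * C) = 2 * (p:ℝ) := by field_simp
      rw [this]
      linarith
    linarith [le_trans hml (le_of_lt hgap), le_trans hS0' hml]
  set A := Gmat p * Om * (Gmat p)ᵀ with hA
  have h1 : (∑ k, A k k) ^ 2 ≤ (p:ℝ) * ∑ k, A k k ^ 2 := by
    have hcs := sq_sum_le_card_mul_sum_sq (s := (Finset.univ : Finset (Fin p)))
      (f := fun k => A k k)
    simpa [Finset.card_univ] using hcs
  have h2 : (∑ k, A k k ^ 2) ≤ trq Om := by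
    rw [trq, ← hA]
    refine Finset.sum_le_sum fun k _ => ?_
    rw [sq]
    exact Finset.single_le_sum (f := fun l => A k l * A k l)
      (fun l _ => mul_self_nonneg _) (Finset.mem_univ k)
  have h0 : 0 < (∑ k, A k k) ^ 2 := pow_pos htrSig 2
  nlinarith


lemma maxEig_le_of (h : Hyp P ν1 ν2 Om) (hn : 0 < n1) (hp : 0 < p)
    {C : ℝ} (hCpos : 0 < C) (hdiag : ∀ j, 1 / C ≤ Om j j ∧ Om j j ≤ C)
    (habs : ∀ a b, |Om a b| ≤ C)
    (hlo : maxEig Om / Real.sqrt ((Om * Om).trace) ≤ 1 / (2 * C ^ 2)) :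
    maxEig Om ≤ (p : ℝ) / (2 * C) := by
  have hppos : (0:ℝ) < p := by exact_mod_cast hp
  have htle := trOmOm_le (p := p) (Om := Om) hCpos habs
  have htge := trOmOm_ge h hn hp hCpos (hdiag _).1
  have htpos : 0 < (Om * Om).trace := lt_of_lt_of_le (by positivity) htge
  have hsqrtpos : 0 < Real.sqrt ((Om * Om).trace) := Real.sqrt_pos.2 htpos
  have h1 : maxEig Om ≤ 1 / (2 * C ^ 2) * Real.sqrt ((Om * Om).trace) := by
    rw [div_le_iff₀ hsqrtpos] at hlo
    linarith
  have h2 : Real.sqrt ((Om * Om).trace) ≤ C * p := by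
    have hsq : (Om * Om).trace ≤ (C * p) ^ 2 := by nlinarith
    calc Real.sqrt ((Om * Om).trace) ≤ Real.sqrt ((C * p) ^ 2) := Real.sqrt_le_sqrt hsq
      _ = C * p := Real.sqrt_sq (by positivity)
  calc maxEig Om ≤ 1 / (2 * C ^ 2) * (C * p) :=
        le_trans h1 (mul_le_mul_of_nonneg_left h2 (by positivity))
    _ = (p : ℝ) / (2 * C) := by field_simp

lemma bq_eq_dot : bq ν1 ν2 Om
    = (mud ν1 ν2) ⬝ᵥ (Gmat p * Om * (Gmat p)ᵀ).mulVec (mud ν1 ν2) := by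
  rw [bq]
  simp only [dotProduct, Matrix.mulVec]
  refine Finset.sum_congr rfl fun k _ => ?_
  rw [Finset.mul_sum]
  exact Finset.sum_congr rfl fun l _ => by ring

lemma habs_of (h : Hyp P ν1 ν2 Om) (hn : 0 < n1)
    {C : ℝ} (hCpos : 0 < C) (hdiag : ∀ j, 1 / C ≤ Om j j ∧ Om j j ≤ C) :
    ∀ a b, |Om a b| ≤ C := by
  intro a b
  have hbb : 0 < Om b b := lt_of_lt_of_le (by positivity) (hdiag b).1
  have hsq := cov_sq_le h hn a b hbb
  have hC2 : Om a b ^ 2 ≤ C ^ 2 := by nlinarith [(hdiag a).2, (hdiag b).2, (hdiag a).1,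
    (hdiag b).1, hbb]
  have := Real.sqrt_le_sqrt hC2
  rwa [Real.sqrt_sq_eq_abs, Real.sqrt_sq hCpos.le] at this


set_option maxHeartbeats 1600000 in
/-- Pure real arithmetic for the final bound. -/
lemma main_arith {N1 N2 K0 C1 M a b t zα σ2 ε : ℝ}
    (hN1 : 2 ≤ N1) (hN2 : 2 ≤ N2) (hK0 : 0 < K0) (hK : N1 ≤ K0 * N2)
    (hC1 : C1 = 4 + 4 * K0 ^ 2 + 4 * K0)
    (hM1 : 8 * C1 * (|zα| + 1) ^ 2 ≤ M) (hMpos : 0 < M)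
    (hε : 0 < ε) (hM2 : 32 * C1 / ε ≤ M)
    (ha0 : 0 ≤ a) (hb0 : 0 ≤ b) (ht0 : 0 ≤ t)
    (hsig : M ≤ N1 ^ 2 * a ^ 2 / max (N1 * b) t)
    (hσ2 : σ2 = 2 * t / (N1 * (N1 - 1)) + 2 * t / (N2 * (N2 - 1))
      + 4 * t / (N1 * N2)) :
    0 < a ∧ zα * Real.sqrt σ2 ≤ a / 2 ∧
      8 * (σ2 + 4 * ((N1 + N2) / (N1 * N2)) * b) / a ^ 2 < ε := by
  have hN1pos : (0:ℝ) < N1 := by linarith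
  have hN2pos : (0:ℝ) < N2 := by linarith
  subst hσ2
  subst hC1
  have hC1pos : (0:ℝ) < 4 + 4 * K0 ^ 2 + 4 * K0 := by positivity
  have hmax0 : (0:ℝ) ≤ max (N1 * b) t := le_max_of_le_right ht0
  have hmaxpos : 0 < max (N1 * b) t := by
    rcases eq_or_lt_of_le hmax0 with heq | hlt
    · exfalso
      rw [← heq, div_zero] at hsig
      linarith
    · exact hlt
  have hkey : M * max (N1 * b) t ≤ N1 ^ 2 * a ^ 2 := (le_div_iff₀ hmaxpos).1 hsig
  have ha2pos : 0 < a ^ 2 := by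
    have h0 : 0 < N1 ^ 2 * a ^ 2 := lt_of_lt_of_le (mul_pos hMpos hmaxpos) hkey
    rcases eq_or_lt_of_le (sq_nonneg a) with heq | hlt
    · exfalso
      rw [← heq, mul_zero] at h0
      exact lt_irrefl _ h0
    · exact hlt
  have hapos : 0 < a := by
    rcases eq_or_lt_of_le ha0 with heq | hlt
    · exfalso
      rw [← heq] at ha2pos
      norm_num at ha2pos
    · exact hlt
  have htM : t * M ≤ N1 ^ 2 * a ^ 2 := by
    nlinarith [mul_le_mul_of_nonneg_right (le_max_right (N1 * b) t) hMpos.le, hkey]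
  have hbM : b * M ≤ N1 * a ^ 2 := by
    have h2 : (N1 * b) * M ≤ N1 ^ 2 * a ^ 2 := by
      nlinarith [mul_le_mul_of_nonneg_right (le_max_left (N1 * b) t) hMpos.le, hkey]
    have h3 : N1 * (b * M) ≤ N1 * (N1 * a ^ 2) := by nlinarith [h2]
    exact le_of_mul_le_mul_left h3 hN1pos
  have hN1sq : N1 ^ 2 ≤ K0 ^ 2 * N2 ^ 2 := by nlinarith
  have hD1 : (0:ℝ) < N1 * (N1 - 1) := by nlinarith
  have hD2 : (0:ℝ) < N2 * (N2 - 1) := by nlinarith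
  have hD3 : (0:ℝ) < N1 * N2 := by positivity
  have e1 : 2 * t / (N1 * (N1 - 1)) ≤ 4 * a ^ 2 / M := by
    rw [div_le_div_iff₀ hD1 hMpos]
    nlinarith [htM, mul_nonneg (mul_nonneg (sq_nonneg a) (by linarith : (0:ℝ) ≤ N1))
      (by linarith : (0:ℝ) ≤ N1 - 2)]
  have e2 : 2 * t / (N2 * (N2 - 1)) ≤ 4 * K0 ^ 2 * a ^ 2 / M := by
    rw [div_le_div_iff₀ hD2 hMpos]
    nlinarith [htM, mul_le_mul_of_nonneg_right hN1sq (sq_nonneg a),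
      mul_nonneg (mul_nonneg (mul_nonneg (sq_nonneg K0) (sq_nonneg a))
        (by linarith : (0:ℝ) ≤ N2)) (by linarith : (0:ℝ) ≤ N2 - 2)]
  have e3 : 4 * t / (N1 * N2) ≤ 4 * K0 * a ^ 2 / M := by
    rw [div_le_div_iff₀ hD3 hMpos]
    nlinarith [htM, mul_le_mul_of_nonneg_right hK (mul_nonneg hN1pos.le (sq_nonneg a))]
  have e4 : 4 * ((N1 + N2) / (N1 * N2)) * b ≤ (4 + 4 * K0) * a ^ 2 / M := by
    have hre : 4 * ((N1 + N2) / (N1 * N2)) * b = (4 * (N1 + N2) * b) / (N1 * N2) := by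
      ring
    rw [hre, div_le_div_iff₀ hD3 hMpos]
    nlinarith [mul_le_mul_of_nonneg_left hbM (by positivity : (0:ℝ) ≤ 4 * N1),
      mul_le_mul_of_nonneg_left hbM (by positivity : (0:ℝ) ≤ 4 * N2),
      mul_le_mul_of_nonneg_left hK (by positivity : (0:ℝ) ≤ 4 * N1 * a ^ 2)]
  have hsnA : 2 * t / (N1 * (N1 - 1)) + 2 * t / (N2 * (N2 - 1)) + 4 * t / (N1 * N2)
      + 4 * ((N1 + N2) / (N1 * N2)) * b
      ≤ 2 * (4 + 4 * K0 ^ 2 + 4 * K0) * a ^ 2 / M := by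
    have hsum : 4 * a ^ 2 / M + 4 * K0 ^ 2 * a ^ 2 / M + 4 * K0 * a ^ 2 / M
        + (4 + 4 * K0) * a ^ 2 / M = (8 + 4 * K0 ^ 2 + 8 * K0) * a ^ 2 / M := by
      ring
    have hfin : (8 + 4 * K0 ^ 2 + 8 * K0) * a ^ 2 / M
        ≤ 2 * (4 + 4 * K0 ^ 2 + 4 * K0) * a ^ 2 / M := by
      rw [div_le_div_iff₀ hMpos hMpos]
      nlinarith [mul_nonneg (mul_nonneg (sq_nonneg K0) (sq_nonneg a)) hMpos.le]
    linarith
  have hterm4 : (0:ℝ) ≤ 4 * ((N1 + N2) / (N1 * N2)) * b :=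
    mul_nonneg (by positivity) hb0
  have hσ2le : 2 * t / (N1 * (N1 - 1)) + 2 * t / (N2 * (N2 - 1)) + 4 * t / (N1 * N2)
      ≤ 2 * (4 + 4 * K0 ^ 2 + 4 * K0) * a ^ 2 / M := by linarith
  refine ⟨hapos, ?_, ?_⟩
  · have hzpos : (0:ℝ) < |zα| + 1 := by positivity
    have h1 : 2 * t / (N1 * (N1 - 1)) + 2 * t / (N2 * (N2 - 1)) + 4 * t / (N1 * N2)
        ≤ (a / (2 * (|zα| + 1))) ^ 2 := by
      have h2 : 2 * (4 + 4 * K0 ^ 2 + 4 * K0) * a ^ 2 / M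
          ≤ (a / (2 * (|zα| + 1))) ^ 2 := by
        rw [div_pow, div_le_div_iff₀ hMpos (by positivity)]
        nlinarith [mul_le_mul_of_nonneg_right hM1 (sq_nonneg a)]
      linarith
    have h2 : Real.sqrt (2 * t / (N1 * (N1 - 1)) + 2 * t / (N2 * (N2 - 1))
        + 4 * t / (N1 * N2)) ≤ a / (2 * (|zα| + 1)) := by
      calc Real.sqrt (2 * t / (N1 * (N1 - 1)) + 2 * t / (N2 * (N2 - 1))
            + 4 * t / (N1 * N2)) ≤ Real.sqrt ((a / (2 * (|zα| + 1))) ^ 2) :=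
          Real.sqrt_le_sqrt h1
        _ = a / (2 * (|zα| + 1)) := Real.sqrt_sq (by positivity)
    calc zα * Real.sqrt (2 * t / (N1 * (N1 - 1)) + 2 * t / (N2 * (N2 - 1))
          + 4 * t / (N1 * N2))
        ≤ |zα| * Real.sqrt (2 * t / (N1 * (N1 - 1)) + 2 * t / (N2 * (N2 - 1))
          + 4 * t / (N1 * N2)) :=
          mul_le_mul_of_nonneg_right (le_abs_self zα) (Real.sqrt_nonneg _)
      _ ≤ |zα| * (a / (2 * (|zα| + 1))) := mul_le_mul_of_nonneg_left h2 (abs_nonneg zα)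
      _ ≤ a / 2 := by
          have hre : |zα| * (a / (2 * (|zα| + 1))) = (|zα| * a) / (2 * (|zα| + 1)) := by
            ring
          rw [hre, div_le_div_iff₀ (by positivity) two_pos]
          nlinarith [hapos, abs_nonneg zα]
  · have h8 : 8 * (2 * t / (N1 * (N1 - 1)) + 2 * t / (N2 * (N2 - 1)) + 4 * t / (N1 * N2)
        + 4 * ((N1 + N2) / (N1 * N2)) * b) / a ^ 2
        ≤ 8 * (2 * (4 + 4 * K0 ^ 2 + 4 * K0) * a ^ 2 / M) / a ^ 2 := by
      apply div_le_div_of_nonneg_right ?_ ha2pos.le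
      linarith
    have h9 : 8 * (2 * (4 + 4 * K0 ^ 2 + 4 * K0) * a ^ 2 / M) / a ^ 2
        = 16 * (4 + 4 * K0 ^ 2 + 4 * K0) / M := by
      field_simp
      ring
    have h10 : 16 * (4 + 4 * K0 ^ 2 + 4 * K0) / M ≤ ε / 2 := by
      rw [div_le_div_iff₀ hMpos two_pos]
      have h11 : 32 * (4 + 4 * K0 ^ 2 + 4 * K0) ≤ M * ε := (div_le_iff₀ hε).1 hM2
      nlinarith
    have h12 : 8 * (2 * t / (N1 * (N1 - 1)) + 2 * t / (N2 * (N2 - 1)) + 4 * t / (N1 * N2)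
        + 4 * ((N1 + N2) / (N1 * N2)) * b) / a ^ 2 ≤ ε / 2 := by
      rw [h9] at h8
      linarith
    linarith

end CQ

set_option maxHeartbeats 1600000 in
/-- **Proposition 1, consistency of the quadratic-type test.**
Under Assumptions A1(i) (with a bounded constant `K4`), A2 and A3, if
`n1²·‖μ‖⁴ / max(n1·μᵀΣμ, tr(Σ²)) → ∞`, where `μ = G(ν^{(1)} − ν^{(2)})` and
`Σ = GΩGᵀ`, then `P(Q_{n1,n2} > z_α) → 1` as `n1, n2, p → ∞`,
where `z_α` is the upper `α`-quantile of the standard normal distribution. -/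
theorem quadratic_test_consistency
    (Mo : CompModel) (K4 : ℝ) (hA1i : Mo.A1i K4)
    (hA2i : Mo.A2i) (α0 : ℝ) (hα0 : 0 < α0) (hA2ii : Mo.A2ii α0)
    (c : ℝ) (hA3 : Mo.A3 c)
    (hsignal : Tendsto (fun n =>
        (Mo.n1 n : ℝ) ^ 2 * (∑ j, Mo.muDiff n j ^ 2) ^ 2
          / max ((Mo.n1 n : ℝ) * (Mo.muDiff n ⬝ᵥ (Mo.Sigma n).mulVec (Mo.muDiff n)))
                ((Mo.Sigma n * Mo.Sigma n).trace))
      atTop atTop)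
    (α : ℝ) (hα : α ∈ Set.Ioo (0 : ℝ) 1) :
    Tendsto (fun n =>
        ((Mo.P n) {ω | stdNormalUpperQuantile α
            < Qstat (Mo.Sigma n) (Mo.Xc n ω) (Mo.Yc n ω)}).toReal)
      atTop (𝓝 1) := by
  classical
  obtain ⟨hc0, hn1top, hn2top, hptop, hratio⟩ := hA3
  obtain ⟨C, hCpos, hdiagC⟩ := hA2i
  have hHyp : ∀ n, CQ.Hyp (Mo.P n) (Mo.ν1 n) (Mo.ν2 n) (Mo.Omat n) := by
    intro n
    refine ⟨Mo.probP n, Mo.indep n, ?_, ?_, ?_, ?_⟩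
    · intro s a
      cases s with
      | inl i => exact Mo.int1 n i a
      | inr j => exact Mo.int2 n j a
    · intro s a b
      cases s with
      | inl i => exact Mo.intSq1 n i a b
      | inr j => exact Mo.intSq2 n j a b
    · intro s a
      cases s with
      | inl i => exact Mo.mean1 n i a
      | inr j => exact Mo.mean2 n j a
    · intro s a b
      cases s with
      | inl i => exact Mo.cov1 n i a b
      | inr j => exact Mo.cov2 n j a b
  set zα := stdNormalUpperQuantile α with hza_def
  have hc1 : c < 1 := hc0.2
  have hc0' : 0 < c := hc0.1
  have h1c : (0:ℝ) < 1 - c := by linarith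
  have hratio2 : Tendsto (fun n => (Mo.n1 n : ℝ) / (Mo.n2 n : ℝ)) atTop
      (𝓝 (c / (1 - c))) := by
    have hden : Tendsto (fun n => 1 - (Mo.n1 n : ℝ) / ((Mo.n1 n : ℝ) + (Mo.n2 n : ℝ)))
        atTop (𝓝 (1 - c)) := tendsto_const_nhds.sub hratio
    have hdiv := hratio.div hden (ne_of_gt h1c)
    refine hdiv.congr' ?_
    filter_upwards [hn1top.eventually_ge_atTop 1, hn2top.eventually_ge_atTop 1]
      with n h1 h2
    have ha : (0:ℝ) < (Mo.n1 n : ℝ) := by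
      have : (1:ℝ) ≤ (Mo.n1 n : ℝ) := by exact_mod_cast h1
      linarith
    have hb : (0:ℝ) < (Mo.n2 n : ℝ) := by
      have : (1:ℝ) ≤ (Mo.n2 n : ℝ) := by exact_mod_cast h2
      linarith
    have hab : (0:ℝ) < (Mo.n1 n : ℝ) + (Mo.n2 n : ℝ) := by linarith
    simp only [Pi.div_apply]
    field_simp
    rw [add_sub_cancel_left, div_self (ne_of_gt hb)]
  set K0 : ℝ := c / (1 - c) + 1 with hK0
  have hK00 : 0 < c / (1 - c) := div_pos hc0' h1c
  have hK0pos : 0 < K0 := by rw [hK0]; linarith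
  have hevK : ∀ᶠ n in atTop, (Mo.n1 n : ℝ) ≤ K0 * (Mo.n2 n : ℝ) := by
    have h1 : ∀ᶠ n in atTop, (Mo.n1 n : ℝ) / (Mo.n2 n : ℝ) < K0 :=
      hratio2.eventually_lt_const (by rw [hK0]; linarith)
    filter_upwards [h1, hn2top.eventually_ge_atTop 1] with n hn hn2
    have hb : (0:ℝ) < (Mo.n2 n : ℝ) := by
      have : (1:ℝ) ≤ (Mo.n2 n : ℝ) := by exact_mod_cast hn2
      linarith
    have := (div_lt_iff₀ hb).1 hn
    linarith
  set C1 : ℝ := 4 + 4 * K0 ^ 2 + 4 * K0 with hC1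
  have hC1pos : 0 < C1 := by positivity
  have hlog_ev : ∀ᶠ n in atTop, 1 ≤ Real.log (Mo.p n) := by
    filter_upwards [hptop.eventually_ge_atTop 3] with n hp3
    have hp3' : (3:ℝ) ≤ (Mo.p n : ℝ) := by exact_mod_cast hp3
    have hppos : (0:ℝ) < (Mo.p n : ℝ) := by linarith
    rw [Real.le_log_iff_exp_le hppos]
    have := Real.exp_one_lt_d9
    linarith
  have hlo_ev : ∀ᶠ n in atTop, maxEig (Mo.Omat n)
      / Real.sqrt ((Mo.Omat n * Mo.Omat n).trace) ≤ 1 / (2 * C ^ 2) := by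
    have hd := hA2ii.1.def (show (0:ℝ) < 1 / (2 * C ^ 2) by positivity)
    filter_upwards [hd, hlog_ev] with n hdn hlogn
    have hgnn : (0:ℝ) ≤ Real.log (Mo.p n) ^ (-(1 + α0) : ℝ) :=
      Real.rpow_nonneg (by linarith) _
    have hg1 : Real.log (Mo.p n) ^ (-(1 + α0) : ℝ) ≤ 1 :=
      Real.rpow_le_one_of_one_le_of_nonpos hlogn (by linarith)
    rw [Real.norm_eq_abs, Real.norm_eq_abs, abs_of_nonneg hgnn] at hdn
    have h1 := le_trans (le_abs_self _) hdn
    calc maxEig (Mo.Omat n) / Real.sqrt ((Mo.Omat n * Mo.Omat n).trace)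
        ≤ 1 / (2 * C ^ 2) * Real.log (Mo.p n) ^ (-(1 + α0) : ℝ) := h1
      _ ≤ 1 / (2 * C ^ 2) * 1 := mul_le_mul_of_nonneg_left hg1 (by positivity)
      _ = 1 / (2 * C ^ 2) := mul_one _
  refine Metric.tendsto_nhds.2 ?_
  intro ε hε
  set M : ℝ := max (8 * C1 * (|zα| + 1) ^ 2) (32 * C1 / ε) + 1 with hM
  have hM1 : 8 * C1 * (|zα| + 1) ^ 2 ≤ M := by
    rw [hM]
    linarith [le_max_left (8 * C1 * (|zα| + 1) ^ 2) (32 * C1 / ε)]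
  have hM2 : 32 * C1 / ε ≤ M := by
    rw [hM]
    linarith [le_max_right (8 * C1 * (|zα| + 1) ^ 2) (32 * C1 / ε)]
  have hMpos : 0 < M := by
    have h0 : (0:ℝ) ≤ max (8 * C1 * (|zα| + 1) ^ 2) (32 * C1 / ε) :=
      le_trans (by positivity) (le_max_left (8 * C1 * (|zα| + 1) ^ 2) (32 * C1 / ε))
    rw [hM]
    linarith
  filter_upwards [hn1top.eventually_ge_atTop 2, hn2top.eventually_ge_atTop 2,
    hptop.eventually_ge_atTop 3, hevK, hlo_ev, hsignal.eventually_ge_atTop M]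
    with n hn1 hn2 hp3 hK hlo hsig
  have h := hHyp n
  clear hsignal hratio hratio2 hn1top hn2top hptop hevK hlo_ev hlog_ev hA1i hA2ii
    hα hc0 hHyp hM
  clear_value zα K0 C1 M
  have hmu : CQ.mud (Mo.ν1 n) (Mo.ν2 n) = Mo.muDiff n := rfl
  have hsigma : Gmat (Mo.p n) * Mo.Omat n * (Gmat (Mo.p n))ᵀ = Mo.Sigma n := rfl
  have hn1pos : 0 < Mo.n1 n := by omega
  have hppos : 0 < Mo.p n := by omega
  have hN1 : (2:ℝ) ≤ (Mo.n1 n : ℝ) := by exact_mod_cast hn1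
  have hN2 : (2:ℝ) ≤ (Mo.n2 n : ℝ) := by exact_mod_cast hn2
  have habs := CQ.habs_of h hn1pos hCpos (fun j => hdiagC n j)
  have hml := CQ.maxEig_le_of h hn1pos hppos hCpos (fun j => hdiagC n j) habs hlo
  have htrq : 0 < CQ.trq (Mo.Omat n) :=
    CQ.trq_pos_main h hn1pos hppos hCpos (fun j => hdiagC n j) habs hml
  have hts : (Mo.Sigma n * Mo.Sigma n).trace = CQ.trq (Mo.Omat n) :=
    CQ.trace_eq_trq h hn1pos
  have hbq : Mo.muDiff n ⬝ᵥ (Mo.Sigma n).mulVec (Mo.muDiff n)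
      = CQ.bq (Mo.ν1 n) (Mo.ν2 n) (Mo.Omat n) := (CQ.bq_eq_dot).symm
  rw [hbq, hts] at hsig
  set a : ℝ := ∑ j, Mo.muDiff n j ^ 2 with hadef
  set b : ℝ := CQ.bq (Mo.ν1 n) (Mo.ν2 n) (Mo.Omat n) with hbdef
  set t : ℝ := CQ.trq (Mo.Omat n) with htdef
  clear_value a b t
  have hb0 : 0 ≤ b := by rw [hbdef]; exact CQ.bq_nonneg h hn1pos
  have ht0 : 0 ≤ t := by rw [htdef]; exact CQ.trq_nonneg _
  have ha0 : 0 ≤ a := by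
    rw [hadef]
    exact Finset.sum_nonneg fun j _ => sq_nonneg _
  have hσ2form : sigma2 (Mo.n1 n) (Mo.n2 n) (Mo.Sigma n)
      = 2 * t / ((Mo.n1 n : ℝ) * ((Mo.n1 n : ℝ) - 1))
        + 2 * t / ((Mo.n2 n : ℝ) * ((Mo.n2 n : ℝ) - 1))
        + 4 * t / ((Mo.n1 n : ℝ) * (Mo.n2 n : ℝ)) := by
    simp only [sigma2]
    rw [hts]
  obtain ⟨hapos, hza_bound, hfinal⟩ :=
    CQ.main_arith hN1 hN2 hK0pos hK hC1 hM1 hMpos hε hM2 ha0 hb0 ht0 hsig hσ2form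
  have haq : 0 < ∑ k, CQ.mud (Mo.ν1 n) (Mo.ν2 n) k ^ 2 := by
    rw [hmu, ← hadef]
    exact hapos
  have htrq2 : 0 < CQ.trq (Mo.Omat n) := by
    rw [← htdef]
    exact htrq
  have hzaKB : zα * Real.sqrt (sigma2 (Mo.n1 n) (Mo.n2 n)
      (Gmat (Mo.p n) * Mo.Omat n * (Gmat (Mo.p n))ᵀ))
      ≤ (∑ k, CQ.mud (Mo.ν1 n) (Mo.ν2 n) k ^ 2) / 2 := by
    rw [hmu, ← hadef, hsigma]
    exact hza_bound
  have hkb := CQ.key_bound (P := Mo.P n) h hn1 hn2 zα htrq2 haq hzaKB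
  rw [hsigma, hmu, ← hadef, ← hbdef] at hkb
  have hsetXY : {ω : SampleSpace (Mo.n1 n) (Mo.n2 n) (Mo.p n) |
      Qstat (Mo.Sigma n) (fun i => (Gmat (Mo.p n)).mulVec (ω.1 i))
        (fun j => (Gmat (Mo.p n)).mulVec (ω.2 j)) ≤ zα}
      = {ω | Qstat (Mo.Sigma n) (Mo.Xc n ω) (Mo.Yc n ω) ≤ zα} := rfl
  rw [hsetXY] at hkb
  have hkb2 : ((Mo.P n) {ω | Qstat (Mo.Sigma n) (Mo.Xc n ω) (Mo.Yc n ω) ≤ zα}).toReal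
      < ε := lt_of_le_of_lt hkb hfinal
  have hmQ : Measurable (fun ω => Qstat (Mo.Sigma n) (Mo.Xc n ω) (Mo.Yc n ω)) := by
    have hre : (fun ω => Qstat (Mo.Sigma n) (Mo.Xc n ω) (Mo.Yc n ω))
        = fun ω : SampleSpace (Mo.n1 n) (Mo.n2 n) (Mo.p n) =>
            Tstat (fun i => (Gmat (Mo.p n)).mulVec (ω.1 i))
              (fun j => (Gmat (Mo.p n)).mulVec (ω.2 j))
            / Real.sqrt (sigma2 (Mo.n1 n) (Mo.n2 n) (Mo.Sigma n)) := rfl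
    rw [hre]
    exact CQ.meas_T.div_const _
  have hms : MeasurableSet {ω | zα < Qstat (Mo.Sigma n) (Mo.Xc n ω) (Mo.Yc n ω)} :=
    measurableSet_lt measurable_const hmQ
  haveI hprob := Mo.probP n
  have hone : (Mo.P n) {ω | zα < Qstat (Mo.Sigma n) (Mo.Xc n ω) (Mo.Yc n ω)}
      + (Mo.P n) {ω | zα < Qstat (Mo.Sigma n) (Mo.Xc n ω) (Mo.Yc n ω)}ᶜ = 1 :=
    (measure_add_measure_compl hms).trans measure_univ
  have htot : ((Mo.P n) {ω | zα < Qstat (Mo.Sigma n) (Mo.Xc n ω) (Mo.Yc n ω)}).toReal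
      + ((Mo.P n) {ω | zα < Qstat (Mo.Sigma n) (Mo.Xc n ω) (Mo.Yc n ω)}ᶜ).toReal
      = 1 := by
    rw [← ENNReal.toReal_add (measure_ne_top _ _) (measure_ne_top _ _), hone]
    exact ENNReal.toReal_one
  have hcompl : {ω | zα < Qstat (Mo.Sigma n) (Mo.Xc n ω) (Mo.Yc n ω)}ᶜ
      = {ω | Qstat (Mo.Sigma n) (Mo.Xc n ω) (Mo.Yc n ω) ≤ zα} := by
    ext ω
    simp [not_lt]
  have hcb : ((Mo.P n) {ω | zα < Qstat (Mo.Sigma n) (Mo.Xc n ω) (Mo.Yc n ω)}ᶜ).toReal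
      < ε := by
    rw [hcompl]
    exact hkb2
  rw [Real.dist_eq]
  have habseq : |((Mo.P n) {ω | zα < Qstat (Mo.Sigma n) (Mo.Xc n ω) (Mo.Yc n ω)}).toReal
      - 1|
      = ((Mo.P n) {ω | zα < Qstat (Mo.Sigma n) (Mo.Xc n ω) (Mo.Yc n ω)}ᶜ).toReal := by
    rw [abs_sub_comm]
    rw [show (1:ℝ)
        - ((Mo.P n) {ω | zα < Qstat (Mo.Sigma n) (Mo.Xc n ω) (Mo.Yc n ω)}).toReal
      = ((Mo.P n) {ω | zα < Qstat (Mo.Sigma n) (Mo.Xc n ω) (Mo.Yc n ω)}ᶜ).toReal from by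
        linarith]
    exact abs_of_nonneg ENNReal.toReal_nonneg
  rw [habseq]
  exact hcb


end
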